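/- arXiv:1306.5616 — 3 statements merged into one kernel-verified Lean document; each statement's English description precedes it below -/
import Mathlib

section
/- Let z : [0,1] → ℝ be of class H² (i.e. z and z' are absolutely continuous on [0,1] and z'' is square-integrable) with z(0) = z(1) = 0 and z'(0) = 0. Then for every α ∈ [-2, 2), the integral ∫₀¹ x^α z'(x)² dx is finite and ((1-α)²/4) ∫₀¹ x^(α-2) z(x)² dx ≤ ∫₀¹ x^α z'(x)² dx. -/
open MeasureTheory Set Filter Topology
open scoped ENNReal

/-!
For `0 < ε` and `f` absolutely continuous with `f' = h`, differentiating `x ^ (β - 1) * f x ^ 2`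
gives `(β - 1) ∫_ε^1 x^(β-2) f² + 2 ∫_ε^1 x^(β-1) f h = f(1)² - ε^(β-1) f(ε)²`, where `f(1)²`
has the right sign if `β ≤ 1` and vanishes otherwise. Young's inequality
`2 |1 - β| |x^(β-1) f h| ≤ (1 - β)²/2 · x^(β-2) f² + 2 x^β h²` absorbs the cross term into the
left side, which is finite on `[ε, 1]`. This leaves
`(1 - β)²/4 ∫_ε^1 x^(β-2) f² ≤ ∫_ε^1 x^β h² + |1 - β|/2 · ε^(β-1) f(ε)²`, and the boundary term
vanishes as `ε → 0` as soon as `ε^(β-1) f(ε)² → 0`.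

For `z`, Cauchy–Schwarz and the conditions at `0` give `z'(x)² ≤ x Q(x)` and `z(x)² ≤ x³ Q(x)`
with `Q(x) = ∫_0^x z''² → 0`. This is the decay needed for `f = z`, `β = α ≥ -2`, and for
`f = z'`, `β = 0`; the latter gives `∫ x^(-2) z'² ≤ 4 ∫ z''² < ∞`, which dominates `∫ x^α z'²`.
-/

theorem AbsolutelyContinuousOnInterval.congr {f g : ℝ → ℝ} {a b : ℝ}
    (hf : AbsolutelyContinuousOnInterval f a b) (hfg : EqOn f g (uIcc a b)) :
    AbsolutelyContinuousOnInterval g a b := by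
  refine hf.congr' ?_
  filter_upwards [mem_inf_of_right (mem_principal_self _)] with E hE
  refine Finset.sum_congr rfl fun i hi => ?_
  rw [hfg (hE.1 i hi).1, hfg (hE.1 i hi).2]

section Primitive

variable {f h : ℝ → ℝ} {a b : ℝ}

theorem absolutelyContinuousOnInterval_of_eq_add_integral (hab : a ≤ b)
    (hh : IntervalIntegrable h volume a b) (hf : ∀ x ∈ Icc a b, f x = f a + ∫ t in a..x, h t) :
    AbsolutelyContinuousOnInterval f a b := by
  refine ((contDiffOn_const (c := f a)).absolutelyContinuousOnInterval.fun_add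
    (hh.absolutelyContinuousOnInterval_intervalIntegral left_mem_uIcc)).congr ?_
  rw [uIcc_of_le hab]
  exact fun x hx => (hf x hx).symm

theorem ae_hasDerivAt_of_eq_add_integral (hh : IntervalIntegrable h volume a b)
    (hf : ∀ x ∈ Icc a b, f x = f a + ∫ t in a..x, h t) :
    ∀ᵐ x, x ∈ Ioo a b → HasDerivAt f (h x) x := by
  filter_upwards [hh.ae_hasDerivAt_integral] with x hx hxab
  have hx' : x ∈ uIcc a b := Icc_subset_uIcc (Ioo_subset_Icc_self hxab)
  refine ((hx hx' a left_mem_uIcc).const_add (f a)).congr_of_eventuallyEq ?_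
  filter_upwards [Ioo_mem_nhds hxab.1 hxab.2] with y hy using hf y (Ioo_subset_Icc_self hy)

end Primitive

section Truncated

variable {f h : ℝ → ℝ} {a b : ℝ}

theorem ne_zero_of_mem_uIcc (ha : 0 < a) (hab : a ≤ b) {x : ℝ} (hx : x ∈ uIcc a b) : x ≠ 0 :=
  (ha.trans_le (uIcc_of_le hab ▸ hx).1).ne'

theorem continuousOn_rpow_const_uIcc (ha : 0 < a) (hab : a ≤ b) (p : ℝ) :
    ContinuousOn (fun x : ℝ => x ^ p) (uIcc a b) :=
  continuousOn_id.rpow_const fun _ hx => Or.inl (ne_zero_of_mem_uIcc ha hab hx)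

theorem intervalIntegrable_rpow_mul_sq (ha : 0 < a) (hab : a ≤ b)
    (hf : ContinuousOn f (uIcc a b)) (p : ℝ) :
    IntervalIntegrable (fun x => x ^ p * f x ^ 2) volume a b :=
  ((continuousOn_rpow_const_uIcc ha hab p).mul (hf.pow 2)).intervalIntegrable

theorem intervalIntegrable_rpow_mul_mul (ha : 0 < a) (hab : a ≤ b)
    (hf : ContinuousOn f (uIcc a b)) (hh : IntervalIntegrable h volume a b) (p : ℝ) :
    IntervalIntegrable (fun x => x ^ p * (f x * h x)) volume a b := by
  simpa only [Pi.mul_apply, mul_assoc] using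
    hh.continuousOn_mul ((continuousOn_rpow_const_uIcc ha hab p).mul hf)

theorem integral_deriv_rpow_mul_sq (β : ℝ) (ha : 0 < a) (hab : a ≤ b)
    (hf : AbsolutelyContinuousOnInterval f a b)
    (hderiv : ∀ᵐ x, x ∈ Ioo a b → HasDerivAt f (h x) x) (hh : IntervalIntegrable h volume a b) :
    (β - 1) * (∫ x in a..b, x ^ (β - 2) * f x ^ 2) + 2 * ∫ x in a..b, x ^ (β - 1) * (f x * h x)
      = b ^ (β - 1) * f b ^ 2 - a ^ (β - 1) * f a ^ 2 := by
  have hφ : AbsolutelyContinuousOnInterval (fun x => x ^ (β - 1) * f x ^ 2) a b := by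
    have hw : ContDiffOn ℝ 1 (fun x : ℝ => x ^ (β - 1)) (uIcc a b) := fun x hx =>
      (Real.contDiffAt_rpow_const_of_ne (ne_zero_of_mem_uIcc ha hab hx)).contDiffWithinAt
    simpa only [sq] using hw.absolutelyContinuousOnInterval.fun_mul (hf.fun_mul hf)
  rw [← hφ.integral_deriv_eq_sub, ← intervalIntegral.integral_const_mul,
    ← intervalIntegral.integral_const_mul, ← intervalIntegral.integral_add
      ((intervalIntegrable_rpow_mul_sq ha hab hf.continuousOn _).const_mul _)
      ((intervalIntegrable_rpow_mul_mul ha hab hf.continuousOn hh _).const_mul _)]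
  refine intervalIntegral.integral_congr_ae ?_
  filter_upwards [hderiv, Measure.ae_ne volume b] with x hx hxb hxab
  rw [uIoc_of_le hab] at hxab
  rw [((Real.hasDerivAt_rpow_const (p := β - 1) (Or.inl (ha.trans hxab.1).ne')).fun_mul
    ((hx ⟨hxab.1, lt_of_le_of_ne hxab.2 hxb⟩).fun_pow 2)).deriv, show β - 1 - 1 = β - 2 by ring]
  ring

theorem two_mul_abs_rpow_mul_le {x : ℝ} (hx : 0 < x) (β c u v : ℝ) :
    2 * c * |x ^ (β - 1) * (u * v)| ≤ c ^ 2 / 2 * (x ^ (β - 2) * u ^ 2) + 2 * (x ^ β * v ^ 2) := by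
  set p := x ^ (β / 2 - 1)
  set q := x ^ (β / 2)
  have hp : x ^ (β - 2) = p ^ 2 := by rw [sq, ← Real.rpow_add hx]; ring_nf
  have hq : x ^ β = q ^ 2 := by rw [sq, ← Real.rpow_add hx]; ring_nf
  have hpq : x ^ (β - 1) = p * q := by rw [← Real.rpow_add hx]; ring_nf
  have habs : |x ^ (β - 1) * (u * v)| = |p * u| * |q * v| := by rw [hpq, ← abs_mul]; ring_nf
  rw [habs, hp, hq]
  nlinarith [sq_nonneg (c * |p * u| - 2 * |q * v|), sq_abs (p * u), sq_abs (q * v)]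

theorem weighted_hardy_intervalIntegral {β : ℝ} (ha : 0 < a) (hab : a ≤ b)
    (hf : AbsolutelyContinuousOnInterval f a b)
    (hderiv : ∀ᵐ x, x ∈ Ioo a b → HasDerivAt f (h x) x) (hh : IntervalIntegrable h volume a b)
    (hJ : IntervalIntegrable (fun x => x ^ β * h x ^ 2) volume a b) (hfb : β ≤ 1 ∨ f b = 0) :
    (1 - β) ^ 2 / 4 * ∫ x in a..b, x ^ (β - 2) * f x ^ 2
      ≤ (∫ x in a..b, x ^ β * h x ^ 2) + |1 - β| / 2 * (a ^ (β - 1) * f a ^ 2) := by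
  have hidentity := integral_deriv_rpow_mul_sq β ha hab hf hderiv hh
  have hIint := intervalIntegrable_rpow_mul_sq ha hab hf.continuousOn (β - 2)
  have hXint := intervalIntegrable_rpow_mul_mul ha hab hf.continuousOn hh (β - 1)
  set I := ∫ x in a..b, x ^ (β - 2) * f x ^ 2
  set X := ∫ x in a..b, x ^ (β - 1) * (f x * h x)
  have hpos : ∀ x ∈ Icc a b, 0 < x := fun x hx => ha.trans_le hx.1
  have hfa : 0 ≤ a ^ (β - 1) * f a ^ 2 := by positivity
  have hlinear : |1 - β| * I ≤ 2 * |X| + a ^ (β - 1) * f a ^ 2 := by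
    rcases le_or_gt β 1 with hβ | hβ
    · have : 0 ≤ b ^ (β - 1) * f b ^ 2 := by have := hpos b ⟨hab, le_rfl⟩; positivity
      rw [abs_of_nonneg (sub_nonneg.2 hβ)]
      linarith [le_abs_self X]
    · rw [hfb.resolve_left hβ.not_ge, zero_pow two_ne_zero, mul_zero] at hidentity
      rw [abs_of_neg (sub_neg.2 hβ)]
      linarith [neg_abs_le X]
  have hyoung : 2 * |1 - β| * |X| ≤ |1 - β| ^ 2 / 2 * I + 2 * ∫ x in a..b, x ^ β * h x ^ 2 :=
    calc 2 * |1 - β| * |X| ≤ 2 * |1 - β| * ∫ x in a..b, |x ^ (β - 1) * (f x * h x)| := by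
          gcongr; exact intervalIntegral.abs_integral_le_integral_abs hab
      _ = ∫ x in a..b, 2 * |1 - β| * |x ^ (β - 1) * (f x * h x)| :=
          (intervalIntegral.integral_const_mul _ _).symm
      _ ≤ ∫ x in a..b, (|1 - β| ^ 2 / 2 * (x ^ (β - 2) * f x ^ 2) + 2 * (x ^ β * h x ^ 2)) :=
          intervalIntegral.integral_mono_on hab (hXint.abs.const_mul _)
            ((hIint.const_mul _).add (hJ.const_mul _))
            fun x hx => two_mul_abs_rpow_mul_le (hpos x hx) _ _ _ _
      _ = |1 - β| ^ 2 / 2 * I + 2 * ∫ x in a..b, x ^ β * h x ^ 2 := by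
          rw [intervalIntegral.integral_add (hIint.const_mul _) (hJ.const_mul _),
            intervalIntegral.integral_const_mul, intervalIntegral.integral_const_mul]
  have hI : 0 ≤ I := intervalIntegral.integral_nonneg hab fun x hx => by
    have := hpos x hx; positivity
  have hc : |1 - β| ^ 2 = (1 - β) ^ 2 := sq_abs _
  nlinarith [mul_le_mul_of_nonneg_left hlinear (abs_nonneg (1 - β))]

end Truncated

theorem ofReal_intervalIntegral_eq_lintegral_Ioo {F : ℝ → ℝ} {a b : ℝ} (hab : a ≤ b)
    (hF : IntervalIntegrable F volume a b) (hF0 : ∀ x ∈ Ioo a b, 0 ≤ F x) :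
    ENNReal.ofReal (∫ x in a..b, F x) = ∫⁻ x in Ioo a b, ENNReal.ofReal (F x) := by
  rw [intervalIntegral.integral_of_le hab, integral_Ioc_eq_integral_Ioo]
  exact ofReal_integral_eq_lintegral_ofReal
    ((intervalIntegrable_iff_integrableOn_Ioo_of_le hab).1 hF)
    (ae_restrict_of_forall_mem measurableSet_Ioo hF0)

theorem tendsto_setLIntegral_Ioo_of_antitone {u : ℕ → ℝ} {a b : ℝ} (hu : Antitone u)
    (hlim : Tendsto u atTop (𝓝 a)) (g : ℝ → ℝ≥0∞) :
    Tendsto (fun n => ∫⁻ x in Ioo (u n) b, g x) atTop (𝓝 (∫⁻ x in Ioo a b, g x)) := by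
  have hunion : ⋃ n, Ioo (u n) b = Ioo a b := by
    ext x
    simp only [mem_iUnion, mem_Ioo]
    constructor
    · rintro ⟨n, hn, hxb⟩
      exact ⟨(hu.le_of_tendsto hlim n).trans_lt hn, hxb⟩
    · rintro ⟨hax, hxb⟩
      exact (hlim.eventually (gt_mem_nhds hax)).exists.imp fun n hn => ⟨hn, hxb⟩
  simp_rw [← withDensity_apply g measurableSet_Ioo, ← hunion]
  exact tendsto_measure_iUnion_atTop fun m n hmn => Ioo_subset_Ioo_left (hu hmn)

theorem weighted_hardy_lintegral_Ioo_le {f h : ℝ → ℝ} {β ε : ℝ} (hε : 0 < ε) (hε1 : ε ≤ 1)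
    (hf : AbsolutelyContinuousOnInterval f 0 1)
    (hderiv : ∀ᵐ x, x ∈ Ioo 0 1 → HasDerivAt f (h x) x) (hh : IntervalIntegrable h volume 0 1)
    (hJ : IntegrableOn (fun x => x ^ β * h x ^ 2) (Ioo 0 1)) (hf1 : β ≤ 1 ∨ f 1 = 0) :
    ENNReal.ofReal ((1 - β) ^ 2 / 4) * ∫⁻ x in Ioo ε 1, ENNReal.ofReal (x ^ (β - 2) * f x ^ 2)
      ≤ (∫⁻ x in Ioo 0 1, ENNReal.ofReal (x ^ β * h x ^ 2))
        + ENNReal.ofReal (|1 - β| / 2 * (ε ^ (β - 1) * f ε ^ 2)) := by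
  have hsub : Ioo ε 1 ⊆ Ioo 0 1 := Ioo_subset_Ioo_left hε.le
  have huIcc : uIcc ε 1 ⊆ uIcc 0 1 :=
    uIcc_subset_uIcc (Icc_subset_uIcc ⟨hε.le, hε1⟩) right_mem_uIcc
  have hnonneg : ∀ p : ℝ, ∀ g : ℝ → ℝ, ∀ x ∈ Ioo ε 1, 0 ≤ x ^ p * g x ^ 2 :=
    fun p g x hx => mul_nonneg (Real.rpow_nonneg (hε.trans hx.1).le p) (sq_nonneg _)
  have hJε : IntervalIntegrable (fun x => x ^ β * h x ^ 2) volume ε 1 :=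
    (intervalIntegrable_iff_integrableOn_Ioo_of_le hε1).2 (hJ.mono_set hsub)
  have hreal := weighted_hardy_intervalIntegral hε hε1 (hf.mono huIcc)
    (by filter_upwards [hderiv] with x hx hxε using hx (hsub hxε)) (hh.mono_set huIcc) hJε hf1
  rw [← ofReal_intervalIntegral_eq_lintegral_Ioo hε1
    (intervalIntegrable_rpow_mul_sq hε hε1 (hf.mono huIcc).continuousOn _) (hnonneg _ f),
    ← ENNReal.ofReal_mul (by positivity)]
  calc ENNReal.ofReal ((1 - β) ^ 2 / 4 * ∫ x in ε..1, x ^ (β - 2) * f x ^ 2)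
      ≤ ENNReal.ofReal (∫ x in ε..1, x ^ β * h x ^ 2)
          + ENNReal.ofReal (|1 - β| / 2 * (ε ^ (β - 1) * f ε ^ 2)) :=
        (ENNReal.ofReal_le_ofReal hreal).trans ENNReal.ofReal_add_le
    _ ≤ _ := by
        rw [ofReal_intervalIntegral_eq_lintegral_Ioo hε1 hJε (hnonneg β h)]
        gcongr

theorem weighted_hardy_lintegral {f h : ℝ → ℝ} {β : ℝ}
    (hf : AbsolutelyContinuousOnInterval f 0 1)
    (hderiv : ∀ᵐ x, x ∈ Ioo 0 1 → HasDerivAt f (h x) x) (hh : IntervalIntegrable h volume 0 1)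
    (hf1 : β ≤ 1 ∨ f 1 = 0)
    (hdecay : Tendsto (fun x => x ^ (β - 1) * f x ^ 2) (𝓝[>] 0) (𝓝 0)) :
    ENNReal.ofReal ((1 - β) ^ 2 / 4) * ∫⁻ x in Ioo 0 1, ENNReal.ofReal (x ^ (β - 2) * f x ^ 2)
      ≤ ∫⁻ x in Ioo 0 1, ENNReal.ofReal (x ^ β * h x ^ 2) := by
  rcases eq_or_ne (∫⁻ x in Ioo 0 1, ENNReal.ofReal (x ^ β * h x ^ 2)) ⊤ with hJ | hJ
  · exact hJ ▸ le_top
  have hJint : IntegrableOn (fun x => x ^ β * h x ^ 2) (Ioo 0 1) :=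
    ⟨(measurable_id.pow_const β).aestronglyMeasurable.mul
        ((hh.1.mono_set Ioo_subset_Ioc_self).aestronglyMeasurable.pow 2),
      (hasFiniteIntegral_iff_ofReal (ae_restrict_of_forall_mem measurableSet_Ioo fun x hx =>
        mul_nonneg (Real.rpow_nonneg hx.1.le β) (sq_nonneg _))).2 hJ.lt_top⟩
  set u : ℕ → ℝ := fun n => 1 / (n + 1)
  have hu_pos : ∀ n, 0 < u n := fun n => Nat.one_div_pos_of_nat
  have hu_lim : Tendsto u atTop (𝓝 0) := tendsto_one_div_add_atTop_nhds_zero_nat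
  have hboundary : Tendsto (fun n => u n ^ (β - 1) * f (u n) ^ 2) atTop (𝓝 0) :=
    hdecay.comp (tendsto_nhdsWithin_iff.2 ⟨hu_lim, Eventually.of_forall hu_pos⟩)
  refine le_of_tendsto_of_tendsto'
    (ENNReal.Tendsto.const_mul (tendsto_setLIntegral_Ioo_of_antitone
      (fun m n hmn => Nat.one_div_le_one_div hmn) hu_lim _) (Or.inr ENNReal.ofReal_ne_top))
    ?_ fun n => weighted_hardy_lintegral_Ioo_le (hu_pos n)
      (div_le_one_of_le₀ (by simp) (by positivity)) hf hderiv hh hJint hf1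
  simpa only [mul_zero, ENNReal.ofReal_zero, add_zero] using
    tendsto_const_nhds.add (ENNReal.tendsto_ofReal (hboundary.const_mul (|1 - β| / 2)))

theorem sq_intervalIntegral_le {ψ : ℝ → ℝ} {a b : ℝ} (hab : a ≤ b)
    (hψ : IntervalIntegrable ψ volume a b)
    (hψ2 : IntervalIntegrable (fun x => ψ x ^ 2) volume a b) :
    (∫ x in a..b, ψ x) ^ 2 ≤ (b - a) * ∫ x in a..b, ψ x ^ 2 := by
  rcases hab.eq_or_lt with rfl | hlt
  · simp
  have hjensen : (⨍ x in a..b, ψ x) ^ 2 ≤ ⨍ x in a..b, ψ x ^ 2 :=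
    even_two.convexOn_pow.map_set_average_le (continuous_pow 2).continuousOn isClosed_univ
      (by simp [uIoc_of_le hab, hlt]) (by simp [uIoc_of_le hab]) (by simp)
      (intervalIntegrable_iff.1 hψ) (intervalIntegrable_iff.1 hψ2)
  rw [interval_average_eq, interval_average_eq, smul_eq_mul, smul_eq_mul, mul_pow] at hjensen
  have : 0 < b - a := sub_pos.2 hlt
  field_simp at hjensen
  exact hjensen

theorem tendsto_intervalIntegral_nhdsGT {g : ℝ → ℝ} {a b : ℝ} (hab : a < b)
    (hg : IntervalIntegrable g volume a b) :
    Tendsto (fun x => ∫ t in a..x, g t) (𝓝[>] a) (𝓝 0) := by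
  have := ((hg.absolutelyContinuousOnInterval_intervalIntegral left_mem_uIcc).continuousOn a
    left_mem_uIcc).mono (Ioo_subset_Icc_self.trans Icc_subset_uIcc)
  rwa [ContinuousWithinAt, intervalIntegral.integral_same, nhdsWithin_Ioo_eq_nhdsGT hab] at this

theorem tendsto_rpow_mul_sq_nhdsGT_zero {g Q : ℝ → ℝ} {p : ℝ} {k : ℕ} (hpk : 0 ≤ p + k)
    (hQ : Tendsto Q (𝓝[>] 0) (𝓝 0)) (hg : ∀ x ∈ Ioo (0:ℝ) 1, g x ^ 2 ≤ x ^ k * Q x) :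
    Tendsto (fun x => x ^ p * g x ^ 2) (𝓝[>] 0) (𝓝 0) := by
  refine tendsto_of_tendsto_of_tendsto_of_le_of_le' tendsto_const_nhds hQ ?_ ?_ <;>
    filter_upwards [Ioo_mem_nhdsGT zero_lt_one] with x hx
  · exact mul_nonneg (Real.rpow_nonneg hx.1.le p) (sq_nonneg _)
  · have hQx : 0 ≤ Q x :=
      nonneg_of_mul_nonneg_right ((sq_nonneg _).trans (hg x hx)) (pow_pos hx.1 k)
    calc x ^ p * g x ^ 2 ≤ x ^ p * (x ^ k * Q x) :=
          mul_le_mul_of_nonneg_left (hg x hx) (Real.rpow_nonneg hx.1.le p)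
      _ = x ^ (p + k) * Q x := by rw [Real.rpow_add_natCast hx.1.ne']; ring
      _ ≤ Q x := mul_le_of_le_one_left hQx (Real.rpow_le_one hx.1.le hx.2.le hpk)

theorem sq_le_mul_integral_sq_of_eq_integral {g g' : ℝ → ℝ} {a b : ℝ}
    (hg' : IntervalIntegrable g' volume a b)
    (hg'2 : IntervalIntegrable (fun x => g' x ^ 2) volume a b)
    (hg : ∀ x ∈ Icc a b, g x = g a + ∫ t in a..x, g' t) (hga : g a = 0)
    {x : ℝ} (hx : x ∈ Icc a b) :
    g x ^ 2 ≤ (x - a) * ∫ t in a..x, g' t ^ 2 := by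
  have hsub : uIcc a x ⊆ uIcc a b := uIcc_subset_uIcc left_mem_uIcc (Icc_subset_uIcc hx)
  simpa [hg x hx, hga] using
    sq_intervalIntegral_le hx.1 (hg'.mono_set hsub) (hg'2.mono_set hsub)

theorem sq_le_pow_three_mul_integral_sq_of_eq_iterated_integral {g g' g'' : ℝ → ℝ}
    (hg'' : IntervalIntegrable g'' volume 0 1)
    (hg''2 : IntervalIntegrable (fun x => g'' x ^ 2) volume 0 1)
    (hg : ∀ x ∈ Icc (0:ℝ) 1, g x = g 0 + ∫ t in (0:ℝ)..x, g' t)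
    (hg' : ∀ x ∈ Icc (0:ℝ) 1, g' x = g' 0 + ∫ t in (0:ℝ)..x, g'' t)
    (hg0 : g 0 = 0) (hg'0 : g' 0 = 0) {x : ℝ} (hx : x ∈ Icc (0:ℝ) 1) :
    g x ^ 2 ≤ x ^ 3 * ∫ t in (0:ℝ)..x, g'' t ^ 2 := by
  set Q := ∫ t in (0:ℝ)..x, g'' t ^ 2
  have hQ : 0 ≤ x * Q :=
    mul_nonneg hx.1 (intervalIntegral.integral_nonneg hx.1 fun _ _ => sq_nonneg _)
  have hg'_le : ∀ t ∈ uIoc 0 x, ‖g' t‖ ≤ √(x * Q) := fun t ht => by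
    rw [uIoc_of_le hx.1] at ht
    have ht1 : t ∈ Icc (0:ℝ) 1 := ⟨ht.1.le, ht.2.trans hx.2⟩
    refine Real.abs_le_sqrt ((sq_le_mul_integral_sq_of_eq_integral hg'' hg''2 hg' hg'0
      ht1).trans ?_)
    rw [sub_zero]
    exact mul_le_mul ht.2 (intervalIntegral.integral_mono_interval le_rfl ht1.1 ht.2
      (ae_of_all _ fun _ => sq_nonneg _)
      (hg''2.mono_set (uIcc_subset_uIcc left_mem_uIcc (Icc_subset_uIcc hx))))
      (intervalIntegral.integral_nonneg ht1.1 fun _ _ => sq_nonneg _) hx.1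
  have hint := intervalIntegral.norm_integral_le_of_norm_le_const hg'_le
  rw [Real.norm_eq_abs, sub_zero, abs_of_nonneg hx.1] at hint
  calc g x ^ 2 = |∫ t in (0:ℝ)..x, g' t| ^ 2 := by rw [sq_abs, hg x hx, hg0, zero_add]
    _ ≤ (√(x * Q) * x) ^ 2 := pow_le_pow_left₀ (abs_nonneg _) hint 2
    _ = x ^ 3 * Q := by rw [mul_pow, Real.sq_sqrt hQ]; ring

/-- **Weighted Hardy inequality under a Neumann condition at 0.**
If `z ∈ H²(0,1)` (i.e. `z`, `z'` absolutely continuous on `[0,1]` and `z''`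
square-integrable, encoded via the fundamental theorem of calculus) with
`z 0 = z 1 = 0` and `z' 0 = 0`, then for every `α ∈ [-2,2)` the integral
`∫₀¹ x^α z'(x)² dx` is finite and
`((1-α)²/4) ∫₀¹ x^(α-2) z(x)² dx ≤ ∫₀¹ x^α z'(x)² dx`. -/
theorem weighted_hardy_inequality_neumann
    (z z' z'' : ℝ → ℝ)
    (hz''int : IntervalIntegrable z'' volume 0 1)
    (hz''sq : IntervalIntegrable (fun x => z'' x ^ 2) volume 0 1)
    (hzFTC : ∀ x ∈ Set.Icc (0:ℝ) 1, z x = z 0 + ∫ t in (0:ℝ)..x, z' t)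
    (hz'FTC : ∀ x ∈ Set.Icc (0:ℝ) 1, z' x = z' 0 + ∫ t in (0:ℝ)..x, z'' t)
    (hz0 : z 0 = 0) (hz1 : z 1 = 0) (hz'0 : z' 0 = 0) :
    ∀ α ∈ Set.Ico (-2:ℝ) 2,
      (∫⁻ x in Set.Ioo (0:ℝ) 1, ENNReal.ofReal (x ^ α * z' x ^ 2)) < ⊤ ∧
      ENNReal.ofReal ((1 - α) ^ 2 / 4) *
          (∫⁻ x in Set.Ioo (0:ℝ) 1, ENNReal.ofReal (x ^ (α - 2) * z x ^ 2))
        ≤ ∫⁻ x in Set.Ioo (0:ℝ) 1, ENNReal.ofReal (x ^ α * z' x ^ 2) := by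
  rintro α ⟨hα, -⟩
  have hz'AC := absolutelyContinuousOnInterval_of_eq_add_integral zero_le_one hz''int hz'FTC
  have hz'int : IntervalIntegrable z' volume 0 1 := hz'AC.continuousOn.intervalIntegrable
  have hQ := tendsto_intervalIntegral_nhdsGT zero_lt_one hz''sq
  have hneumann := weighted_hardy_lintegral (β := 0) hz'AC
    (ae_hasDerivAt_of_eq_add_integral hz''int hz'FTC) hz''int (Or.inl zero_le_one)
    (tendsto_rpow_mul_sq_nhdsGT_zero (k := 1) (by norm_num) hQ fun x hx => by
      simpa using sq_le_mul_integral_sq_of_eq_integral hz''int hz''sq hz'FTC hz'0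
        (Ioo_subset_Icc_self hx))
  refine ⟨?_, weighted_hardy_lintegral
    (absolutelyContinuousOnInterval_of_eq_add_integral zero_le_one hz'int hzFTC)
    (ae_hasDerivAt_of_eq_add_integral hz'int hzFTC) hz'int (Or.inr hz1)
    (tendsto_rpow_mul_sq_nhdsGT_zero (k := 3) (by push_cast; linarith) hQ fun x hx =>
      sq_le_pow_three_mul_integral_sq_of_eq_iterated_integral hz''int hz''sq hzFTC hz'FTC hz0
        hz'0 (Ioo_subset_Icc_self hx))⟩
  have hz''fin : ∫⁻ x in Ioo (0:ℝ) 1, ENNReal.ofReal (x ^ (0:ℝ) * z'' x ^ 2) < ⊤ := by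
    simpa using
      ((intervalIntegrable_iff_integrableOn_Ioo_of_le zero_le_one).1 hz''sq).lintegral_lt_top
  calc ∫⁻ x in Ioo (0:ℝ) 1, ENNReal.ofReal (x ^ α * z' x ^ 2)
      ≤ ∫⁻ x in Ioo (0:ℝ) 1, ENNReal.ofReal (x ^ ((0:ℝ) - 2) * z' x ^ 2) :=
        setLIntegral_mono' measurableSet_Ioo fun x hx => ENNReal.ofReal_le_ofReal <|
          mul_le_mul_of_nonneg_right (Real.rpow_le_rpow_of_exponent_ge hx.1 hx.2.le
            (by linarith)) (sq_nonneg _)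
    _ < ⊤ := ENNReal.lt_top_of_mul_ne_top_right (hneumann.trans_lt hz''fin).ne (by norm_num)
end

section
/- Let f : [0,1] → ℝ be of class H² (i.e. f and f' are absolutely continuous on [0,1] and f'' is square-integrable) with f(0) = 0 and f'(0) = 0. Then the function x ↦ f(x)/x² is square-integrable on (0,1). -/
/-!
Since `f 0 = f' 0 = 0`, we have `|f x| ≤ x ∫₀ˣ |f''|`, so `|f x| / x²` is dominated by the
average `x⁻¹ ∫₀ˣ |f''|`, and Hardy's inequality `‖x⁻¹ ∫₀ˣ g‖₂ ≤ 2 ‖g‖₂` concludes.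
Hardy's inequality follows from Cauchy–Schwarz with the weight `t ^ (-1/2)`,
`(∫₀ˣ g)² ≤ 2 √x ∫₀ˣ √t g(t)² dt`, and Tonelli, because `∫ₜ^∞ x ^ (-3/2) dx = 2 t ^ (-1/2)`.
-/

open MeasureTheory Set ENNReal

theorem lintegral_Ioc_ofReal_rpow {r : ℝ} (hr : -1 < r) {x : ℝ} (hx : 0 ≤ x) :
    ∫⁻ t in Ioc 0 x, ENNReal.ofReal (t ^ r) = ENNReal.ofReal (x ^ (r + 1) / (r + 1)) := by
  rw [← ofReal_integral_eq_lintegral_ofReal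
      ((intervalIntegral.intervalIntegrable_rpow' hr).1)
      ((ae_restrict_iff' measurableSet_Ioc).mpr
        (ae_of_all _ fun t ht => Real.rpow_nonneg ht.1.le r)),
    ← intervalIntegral.integral_of_le hx, integral_rpow (Or.inl hr),
    Real.zero_rpow (by linarith), sub_zero]

theorem lintegral_Ioi_ofReal_rpow {r : ℝ} (hr : r < -1) {c : ℝ} (hc : 0 < c) :
    ∫⁻ t in Ioi c, ENNReal.ofReal (t ^ r) = ENNReal.ofReal (-c ^ (r + 1) / (r + 1)) := by
  rw [← ofReal_integral_eq_lintegral_ofReal (integrableOn_Ioi_rpow_of_lt hr hc)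
      ((ae_restrict_iff' measurableSet_Ioi).mpr
        (ae_of_all _ fun t ht => Real.rpow_nonneg (hc.trans ht).le r)),
    integral_Ioi_rpow_of_lt hr hc]

theorem lintegral_Icc_ofReal_rpow_le {t b : ℝ} (ht : 0 < t) :
    ∫⁻ x in Icc t b, ENNReal.ofReal (x ^ (-3 / 2 : ℝ)) ≤
      ENNReal.ofReal (2 * t ^ (-1 / 2 : ℝ)) := by
  calc ∫⁻ x in Icc t b, ENNReal.ofReal (x ^ (-3 / 2 : ℝ))
      ≤ ∫⁻ x in Ioi t, ENNReal.ofReal (x ^ (-3 / 2 : ℝ)) := by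
        rw [Measure.restrict_congr_set Ioi_ae_eq_Ici]
        exact lintegral_mono_set Icc_subset_Ici_self
    _ = ENNReal.ofReal (2 * t ^ (-1 / 2 : ℝ)) := by
        rw [lintegral_Ioi_ofReal_rpow (by norm_num) ht]
        congr 1
        norm_num
        ring

theorem ofReal_rpow_sq {t : ℝ} (ht : 0 ≤ t) (r : ℝ) :
    ENNReal.ofReal (t ^ r) ^ 2 = ENNReal.ofReal (t ^ (2 * r)) := by
  rw [← ENNReal.ofReal_pow (Real.rpow_nonneg ht r), ← Real.rpow_natCast, ← Real.rpow_mul ht,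
    mul_comm]
  norm_num

theorem sq_lintegral_le_of_le_mul {α : Type*} [MeasurableSpace α] {μ : Measure α}
    {g u v : α → ℝ≥0∞} (hu : AEMeasurable u μ) (hv : AEMeasurable v μ)
    (hguv : ∀ᵐ a ∂μ, g a ≤ u a * v a) :
    (∫⁻ a, g a ∂μ) ^ 2 ≤ (∫⁻ a, u a ^ 2 ∂μ) * ∫⁻ a, v a ^ 2 ∂μ := by
  have hCS := ENNReal.lintegral_mul_le_Lp_mul_Lq μ Real.HolderConjugate.two_two hu hv
  simp only [ENNReal.rpow_two, Pi.mul_apply] at hCS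
  calc (∫⁻ a, g a ∂μ) ^ 2 ≤ (∫⁻ a, u a * v a ∂μ) ^ 2 := by
        gcongr 1
        exact lintegral_mono_ae hguv
    _ ≤ ((∫⁻ a, u a ^ 2 ∂μ) ^ (1 / 2 : ℝ) * (∫⁻ a, v a ^ 2 ∂μ) ^ (1 / 2 : ℝ)) ^ 2 := by
        gcongr
    _ = (∫⁻ a, u a ^ 2 ∂μ) * ∫⁻ a, v a ^ 2 ∂μ := by
        rw [mul_pow, ← ENNReal.rpow_natCast, ← ENNReal.rpow_natCast, ← ENNReal.rpow_mul,
          ← ENNReal.rpow_mul]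
        norm_num

theorem sq_lintegral_Ioc_le {g : ℝ → ℝ≥0∞} {x : ℝ} (hx : 0 ≤ x)
    (hg : AEMeasurable g (volume.restrict (Ioc 0 x))) :
    (∫⁻ t in Ioc 0 x, g t) ^ 2 ≤
      2 * ENNReal.ofReal (x ^ (1 / 2 : ℝ)) *
        ∫⁻ t in Ioc 0 x, ENNReal.ofReal (t ^ (1 / 2 : ℝ)) * g t ^ 2 := by
  have hsplit : ∀ᵐ t ∂volume.restrict (Ioc 0 x),
      g t ≤ ENNReal.ofReal (t ^ (-1 / 4 : ℝ)) * (ENNReal.ofReal (t ^ (1 / 4 : ℝ)) * g t) := by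
    refine (ae_restrict_iff' measurableSet_Ioc).mpr (ae_of_all _ fun t ht => le_of_eq ?_)
    rw [← mul_assoc, ← ENNReal.ofReal_mul (Real.rpow_nonneg ht.1.le _), ← Real.rpow_add ht.1]
    norm_num
  refine (sq_lintegral_le_of_le_mul (by fun_prop) (by fun_prop) hsplit).trans (le_of_eq ?_)
  have hweight : ∫⁻ t in Ioc 0 x, ENNReal.ofReal (t ^ (-1 / 4 : ℝ)) ^ 2 =
      2 * ENNReal.ofReal (x ^ (1 / 2 : ℝ)) := by
    rw [setLIntegral_congr_fun measurableSet_Ioc fun t ht => ofReal_rpow_sq ht.1.le _,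
      lintegral_Ioc_ofReal_rpow (by norm_num) hx, ← ENNReal.ofReal_ofNat 2,
      ← ENNReal.ofReal_mul zero_le_two]
    congr 1
    norm_num
    ring
  rw [hweight]
  congr 1
  refine setLIntegral_congr_fun measurableSet_Ioc fun t ht => ?_
  rw [mul_pow, ofReal_rpow_sq ht.1.le]
  norm_num

theorem sq_lintegral_Ioc_div_le {g : ℝ → ℝ≥0∞} {x : ℝ} (hx : 0 < x)
    (hg : AEMeasurable g (volume.restrict (Ioc 0 x))) :
    ((∫⁻ t in Ioc 0 x, g t) / ENNReal.ofReal x) ^ 2 ≤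
      2 * (ENNReal.ofReal (x ^ (-3 / 2 : ℝ)) *
        ∫⁻ t in Ioc 0 x, ENNReal.ofReal (t ^ (1 / 2 : ℝ)) * g t ^ 2) := by
  have hx2 : (ENNReal.ofReal x ^ 2)⁻¹ = ENNReal.ofReal (x ^ (-2 : ℝ)) := by
    rw [← ENNReal.ofReal_pow hx.le, ← ENNReal.ofReal_inv_of_pos (by positivity),
      Real.rpow_neg hx.le, Real.rpow_two]
  calc ((∫⁻ t in Ioc 0 x, g t) / ENNReal.ofReal x) ^ 2
      = (∫⁻ t in Ioc 0 x, g t) ^ 2 * ENNReal.ofReal (x ^ (-2 : ℝ)) := by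
        rw [div_eq_mul_inv, mul_pow, ← ENNReal.inv_pow, hx2]
    _ ≤ 2 * ENNReal.ofReal (x ^ (1 / 2 : ℝ)) *
          (∫⁻ t in Ioc 0 x, ENNReal.ofReal (t ^ (1 / 2 : ℝ)) * g t ^ 2) *
          ENNReal.ofReal (x ^ (-2 : ℝ)) := by
        gcongr
        exact sq_lintegral_Ioc_le hx.le hg
    _ = _ := by
        rw [mul_right_comm, mul_assoc 2, ← ENNReal.ofReal_mul (Real.rpow_nonneg hx.le _),
          ← Real.rpow_add hx, mul_assoc]
        norm_num

theorem lintegral_Ioc_mul_lintegral_Ioc_comm {a b : ℝ} {k w : ℝ → ℝ≥0∞} (hk : Measurable k)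
    (hw : AEMeasurable w (volume.restrict (Ioc a b))) :
    ∫⁻ x in Ioc a b, k x * ∫⁻ t in Ioc a x, w t =
      ∫⁻ t in Ioc a b, w t * ∫⁻ x in Icc t b, k x := by
  set ν := volume.restrict (Ioc a b)
  set F : ℝ → ℝ → ℝ≥0∞ := fun x t =>
    {q : ℝ × ℝ | q.2 ≤ q.1}.indicator (fun q => k q.1 * w q.2) (x, t)
  have hF : AEMeasurable (Function.uncurry F) (ν.prod ν) :=
    ((hk.comp measurable_fst).aemeasurable.mul hw.comp_snd).indicator
      (measurableSet_le measurable_snd measurable_fst)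
  have hleft : ∀ x ∈ Ioc a b, k x * ∫⁻ t in Ioc a x, w t = ∫⁻ t, F x t ∂ν := by
    intro x hx
    have hF_x : F x = (Iic x).indicator fun t => k x * w t := by
      ext t; by_cases h : t ≤ x <;> simp [F, indicator, h]
    rw [hF_x, lintegral_indicator measurableSet_Iic, Measure.restrict_restrict measurableSet_Iic,
      Iic_inter_Ioc_of_le hx.2, lintegral_const_mul'' _ (hw.mono_measure
        (Measure.restrict_mono (Ioc_subset_Ioc_right hx.2) le_rfl))]
  have hright : ∀ t ∈ Ioc a b, w t * ∫⁻ x in Icc t b, k x = ∫⁻ x, F x t ∂ν := by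
    intro t ht
    have hF_t : (F · t) = (Ici t).indicator fun x => k x * w t := by
      ext x; by_cases h : t ≤ x <;> simp [F, indicator, h]
    rw [hF_t, lintegral_indicator measurableSet_Ici, Measure.restrict_restrict measurableSet_Ici,
      lintegral_mul_const _ hk, mul_comm]
    congr 3
    ext x
    simp only [mem_inter_iff, mem_Ici, mem_Ioc, mem_Icc]
    exact ⟨fun h => ⟨h.1, ht.1.trans_le h.1, h.2⟩, fun h => ⟨h.1, h.2.2⟩⟩
  rw [setLIntegral_congr_fun measurableSet_Ioc hleft,
    setLIntegral_congr_fun measurableSet_Ioc hright]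
  exact lintegral_lintegral_swap hF

theorem hardy_lintegral_Ioc {g : ℝ → ℝ≥0∞} {b : ℝ}
    (hg : AEMeasurable g (volume.restrict (Ioc 0 b))) :
    ∫⁻ x in Ioc 0 b, ((∫⁻ t in Ioc 0 x, g t) / ENNReal.ofReal x) ^ 2 ≤
      4 * ∫⁻ t in Ioc 0 b, g t ^ 2 := by
  set w : ℝ → ℝ≥0∞ := fun t => ENNReal.ofReal (t ^ (1 / 2 : ℝ)) * g t ^ 2
  calc ∫⁻ x in Ioc 0 b, ((∫⁻ t in Ioc 0 x, g t) / ENNReal.ofReal x) ^ 2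
      ≤ ∫⁻ x in Ioc 0 b, 2 * (ENNReal.ofReal (x ^ (-3 / 2 : ℝ)) * ∫⁻ t in Ioc 0 x, w t) :=
        setLIntegral_mono' measurableSet_Ioc fun x hx => sq_lintegral_Ioc_div_le hx.1
          (hg.mono_measure (Measure.restrict_mono (Ioc_subset_Ioc_right hx.2) le_rfl))
    _ = 2 * ∫⁻ t in Ioc 0 b, w t * ∫⁻ x in Icc t b, ENNReal.ofReal (x ^ (-3 / 2 : ℝ)) := by
        rw [lintegral_const_mul' _ _ ofNat_ne_top,
          lintegral_Ioc_mul_lintegral_Ioc_comm (by fun_prop) (by fun_prop)]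
    _ ≤ 2 * ∫⁻ t in Ioc 0 b, w t * ENNReal.ofReal (2 * t ^ (-1 / 2 : ℝ)) := by
        gcongr 2 * ?_
        refine setLIntegral_mono' measurableSet_Ioc fun t ht => ?_
        gcongr
        exact lintegral_Icc_ofReal_rpow_le ht.1
    _ = 2 * ∫⁻ t in Ioc 0 b, 2 * g t ^ 2 := by
        congr 1
        refine setLIntegral_congr_fun measurableSet_Ioc fun t ht => ?_
        rw [mul_right_comm, ← ENNReal.ofReal_mul (Real.rpow_nonneg ht.1.le _), mul_left_comm,
          ← Real.rpow_add ht.1]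
        norm_num
    _ = 4 * ∫⁻ t in Ioc 0 b, g t ^ 2 := by
        rw [lintegral_const_mul' _ _ ofNat_ne_top, ← mul_assoc]
        norm_num

theorem continuousOn_Icc_of_eq_add_primitive {u v : ℝ → ℝ} {b : ℝ}
    (hv : IntervalIntegrable v volume 0 b)
    (hu : ∀ x ∈ Icc 0 b, u x = u 0 + ∫ t in 0..x, v t) : ContinuousOn u (Icc 0 b) :=
  ((continuousOn_const.add (intervalIntegral.continuousOn_primitive_interval' hv
    left_mem_uIcc)).mono Icc_subset_uIcc).congr hu

theorem enorm_le_lintegral_of_eq_primitive {u v : ℝ → ℝ} {x : ℝ} (hx : 0 ≤ x)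
    (hu0 : u 0 = 0) (hu : u x = u 0 + ∫ t in 0..x, v t) : ‖u x‖ₑ ≤ ∫⁻ t in Ioc 0 x, ‖v t‖ₑ := by
  rw [hu, hu0, zero_add, intervalIntegral.integral_of_le hx]
  exact enorm_integral_le_lintegral_enorm _

theorem enorm_div_sq_le_lintegral_div {u u' u'' : ℝ → ℝ} {b x : ℝ} (hu0 : u 0 = 0)
    (hu'0 : u' 0 = 0) (hu : ∀ x ∈ Icc 0 b, u x = u 0 + ∫ t in 0..x, u' t)
    (hu' : ∀ x ∈ Icc 0 b, u' x = u' 0 + ∫ t in 0..x, u'' t) (hx : x ∈ Ioc 0 b) :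
    ‖u x / x ^ 2‖ₑ ≤ (∫⁻ t in Ioc 0 x, ‖u'' t‖ₑ) / ENNReal.ofReal x := by
  set M := ∫⁻ t in Ioc 0 x, ‖u'' t‖ₑ
  have hu'_le : ∀ t ∈ Ioc 0 x, ‖u' t‖ₑ ≤ M := fun t ht =>
    (enorm_le_lintegral_of_eq_primitive ht.1.le hu'0 (hu' t ⟨ht.1.le, ht.2.trans hx.2⟩)).trans
      (lintegral_mono_set (Ioc_subset_Ioc_right ht.2))
  have hu_le : ‖u x‖ₑ ≤ M * ENNReal.ofReal x :=
    calc ‖u x‖ₑ ≤ ∫⁻ t in Ioc 0 x, ‖u' t‖ₑ :=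
          enorm_le_lintegral_of_eq_primitive hx.1.le hu0 (hu x ⟨hx.1.le, hx.2⟩)
      _ ≤ ∫⁻ _ in Ioc 0 x, M := setLIntegral_mono' measurableSet_Ioc hu'_le
      _ = M * ENNReal.ofReal x := by rw [setLIntegral_const, Real.volume_Ioc, sub_zero]
  have hx0 : ENNReal.ofReal x ≠ 0 := ENNReal.ofReal_ne_zero_iff.mpr hx.1
  calc ‖u x / x ^ 2‖ₑ = ‖u x‖ₑ * (ENNReal.ofReal x * ENNReal.ofReal x)⁻¹ := by
        rw [div_eq_mul_inv, enorm_mul, enorm_inv (pow_ne_zero 2 hx.1.ne'), enorm_pow,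
          Real.enorm_eq_ofReal hx.1.le, sq]
    _ ≤ M * ENNReal.ofReal x * (ENNReal.ofReal x * ENNReal.ofReal x)⁻¹ := by gcongr
    _ = M / ENNReal.ofReal x := by
        rw [ENNReal.mul_inv (Or.inl hx0) (Or.inl ofReal_ne_top), ← mul_assoc, mul_assoc M,
          ENNReal.mul_inv_cancel hx0 ofReal_ne_top, mul_one, div_eq_mul_inv]

/-- If `f ∈ H²(0,1)` (i.e. `f`, `f'` absolutely continuous on `[0,1]` and `f''`
square-integrable, encoded via the fundamental theorem of calculus) with
`f 0 = 0` and `f' 0 = 0`, then `x ↦ f(x)/x²` is square-integrable on `(0,1)`. -/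
theorem quotient_square_integrable
    (f f' f'' : ℝ → ℝ)
    (hf''int : IntervalIntegrable f'' volume 0 1)
    (hf''sq : IntervalIntegrable (fun x => f'' x ^ 2) volume 0 1)
    (hfFTC : ∀ x ∈ Set.Icc (0:ℝ) 1, f x = f 0 + ∫ t in (0:ℝ)..x, f' t)
    (hf'FTC : ∀ x ∈ Set.Icc (0:ℝ) 1, f' x = f' 0 + ∫ t in (0:ℝ)..x, f'' t)
    (hf0 : f 0 = 0) (hf'0 : f' 0 = 0) :
    IntervalIntegrable (fun x => (f x / x ^ 2) ^ 2) volume 0 1 := by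
  have hf'_cont : ContinuousOn f' (Icc 0 1) := continuousOn_Icc_of_eq_add_primitive hf''int hf'FTC
  have hf_cont : ContinuousOn f (Icc 0 1) :=
    continuousOn_Icc_of_eq_add_primitive (hf'_cont.intervalIntegrable_of_Icc zero_le_one) hfFTC
  have hmeas : AEStronglyMeasurable (fun x => (f x / x ^ 2) ^ 2) (volume.restrict (Ioc 0 1)) :=
    (((hf_cont.mono Ioc_subset_Icc_self).div (continuousOn_pow 2) fun x hx =>
      pow_ne_zero 2 hx.1.ne').pow 2).aestronglyMeasurable measurableSet_Ioc
  have hf''_sq : ∫⁻ t in Ioc 0 1, ‖f'' t‖ₑ ^ 2 < ∞ := by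
    simpa only [hasFiniteIntegral_def, enorm_pow] using hf''sq.1.2
  rw [intervalIntegrable_iff_integrableOn_Ioc_of_le zero_le_one]
  refine ⟨hmeas, ?_⟩
  calc ∫⁻ x in Ioc 0 1, ‖(f x / x ^ 2) ^ 2‖ₑ = ∫⁻ x in Ioc 0 1, ‖f x / x ^ 2‖ₑ ^ 2 := by
        simp only [enorm_pow]
    _ ≤ ∫⁻ x in Ioc 0 1, ((∫⁻ t in Ioc 0 x, ‖f'' t‖ₑ) / ENNReal.ofReal x) ^ 2 :=
        setLIntegral_mono' measurableSet_Ioc fun x hx => by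
          gcongr
          exact enorm_div_sq_le_lintegral_div hf0 hf'0 hfFTC hf'FTC hx
    _ ≤ 4 * ∫⁻ t in Ioc 0 1, ‖f'' t‖ₑ ^ 2 := hardy_lintegral_Ioc hf''int.1.aemeasurable.enorm
    _ < ∞ := ENNReal.mul_lt_top (by norm_num) hf''_sq
end

section
/- Let ν ∈ (0,1), c_ν := ν² - 1/4, γ > 0, n a positive integer, and let f = f_r + f_s ∈ D(A). Set m_ν := min{1, 4ν²}. Then ∫₋₁¹ (A_n f)(x) f(x) dx ≥ m_ν ∫₋₁¹ f_r'(x)² dx + (nπ)² ∫₋₁¹ |x|^(2γ) f(x)² dx. -/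
/-!
Split `[-1, 1]` at `0` and reflect the left half: on each half `f = u + A₁ x^p₁ + A₂ x^p₂` with
`u ∈ H̃²₀(0,1)` and `p₁,₂ = ±ν + 1/2`. Since `p (p - 1) = c_ν` for both exponents, integrating
`-u'' x^p + c_ν u x^(p-2)` by parts twice leaves only the boundary term `p u(1) - u'(1)`; the
terms at `0` vanish because `|u'| ≤ C √x` and `|u| ≤ C x^(3/2)`. Hence on each half
`∫ (Aₙ f) f = ∫ u'² + c_ν ∫ u²/x² + (nπ)² ∫ |x|^(2γ) f²` up to boundary terms at `±1`, which cancel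
between the halves by the Dirichlet and transmission conditions. Finally Hardy's inequality
`∫ u²/x² ≤ 4 ∫ u'²` gives `∫ u'² + c_ν ∫ u²/x² ≥ min(1, 4ν²) ∫ u'²` also when `c_ν < 0`.
-/

open MeasureTheory Real Set Filter Topology

section IntegrationByParts

variable {w φ M : ℝ → ℝ} {a b : ℝ}

theorem integral_mul_primitive_eq_integral_mul_integral (hab : a ≤ b)
    (hw : AEStronglyMeasurable w (volume.restrict (Ioc a b)))
    (hφ : IntervalIntegrable φ volume a b) (hM : IntegrableOn M (Ioc a b))
    (hbound : ∀ x ∈ Ioc a b, |w x| * ∫ t in a..x, |φ t| ≤ M x) :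
    ∫ x in a..b, w x * ∫ t in a..x, φ t = ∫ t in a..b, φ t * ∫ x in t..b, w x := by
  set μ := volume.restrict (Ioc a b)
  set F : ℝ × ℝ → ℝ := {p | p.2 ≤ p.1}.indicator fun p => w p.1 * φ p.2
  have hφμ : Integrable φ μ := (intervalIntegrable_iff_integrableOn_Ioc_of_le hab).1 hφ
  have hsection : ∀ x, (fun t => F (x, t)) = (Iic x).indicator fun t => w x * φ t := by
    intro x; ext t; simp [F, indicator_apply]
  have hsection' : ∀ t, (fun x => F (x, t)) = (Ici t).indicator fun x => φ t * w x := by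
    intro t; ext x; simp [F, indicator_apply, mul_comm]
  have hinner : ∀ x ∈ Ioc a b, ∫ t, F (x, t) ∂μ = w x * ∫ t in a..x, φ t := by
    intro x hx
    rw [hsection, integral_indicator measurableSet_Iic, Measure.restrict_restrict measurableSet_Iic,
      Iic_inter_Ioc_of_le hx.2, integral_const_mul, intervalIntegral.integral_of_le hx.1.le]
  have hinner' : ∀ t ∈ Ioc a b, ∫ x, F (x, t) ∂μ = φ t * ∫ x in t..b, w x := by
    intro t ht
    have hinter : Ici t ∩ Ioc a b = Icc t b := by
      ext x; simp only [mem_inter_iff, mem_Ici, mem_Ioc, mem_Icc]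
      exact ⟨fun h => ⟨h.1, h.2.2⟩, fun h => ⟨h.1, ht.1.trans_le h.1, h.2⟩⟩
    rw [hsection', integral_indicator measurableSet_Ici,
      Measure.restrict_restrict measurableSet_Ici, hinter, integral_const_mul,
      integral_Icc_eq_integral_Ioc, intervalIntegral.integral_of_le ht.2]
  have hFm : AEStronglyMeasurable F (μ.prod μ) :=
    (hw.comp_fst.mul hφμ.aestronglyMeasurable.comp_snd).indicator
      (measurableSet_le measurable_snd measurable_fst)
  have hFint : Integrable F (μ.prod μ) := by
    refine (integrable_prod_iff hFm).2 ⟨ae_of_all _ fun x => ?_, ?_⟩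
    · rw [hsection]; exact (hφμ.const_mul (w x)).indicator measurableSet_Iic
    refine Integrable.mono' hM hFm.norm.integral_prod_right' ?_
    refine (ae_restrict_iff' measurableSet_Ioc).2 (ae_of_all _ fun x hx => ?_)
    have hnorm : (fun t => ‖F (x, t)‖) = fun t => |w x| * (Iic x).indicator (fun t => |φ t|) t := by
      ext t; simp only [F, indicator_apply, mem_ofPred_eq, mem_Iic, Real.norm_eq_abs]
      split_ifs <;> simp [abs_mul]
    rw [Real.norm_eq_abs, abs_of_nonneg (integral_nonneg fun _ => norm_nonneg _), hnorm,
      integral_const_mul, integral_indicator measurableSet_Iic,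
      Measure.restrict_restrict measurableSet_Iic, Iic_inter_Ioc_of_le hx.2,
      ← intervalIntegral.integral_of_le hx.1.le]
    exact hbound x hx
  rw [intervalIntegral.integral_of_le hab, intervalIntegral.integral_of_le hab,
    ← setIntegral_congr_fun measurableSet_Ioc hinner,
    ← setIntegral_congr_fun measurableSet_Ioc hinner']
  exact integral_integral_swap hFint

/-- `h` may be singular at `a`: Fubini on the triangle `t ≤ x` only needs `hbound`. -/
theorem integral_mul_eq_sub_integral_deriv_mul_primitive {h h' : ℝ → ℝ} (hab : a ≤ b)
    (hh' : AEStronglyMeasurable h' (volume.restrict (Ioc a b)))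
    (hφ : IntervalIntegrable φ volume a b) (hM : IntegrableOn M (Ioc a b))
    (hbound : ∀ x ∈ Ioc a b, |h' x| * ∫ t in a..x, |φ t| ≤ M x)
    (hφh : IntervalIntegrable (fun x => φ x * h x) volume a b)
    (hh : ∀ x ∈ Ioc a b, ∫ t in x..b, h' t = h b - h x) :
    ∫ x in a..b, φ x * h x = h b * (∫ x in a..b, φ x) - ∫ x in a..b, h' x * ∫ t in a..x, φ t := by
  have hswapped :
      ∫ x in a..b, φ x * ∫ t in x..b, h' t = ∫ x in a..b, (h b * φ x - φ x * h x) := by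
    rw [intervalIntegral.integral_of_le hab, intervalIntegral.integral_of_le hab]
    exact setIntegral_congr_fun measurableSet_Ioc fun x hx => by simp only [hh x hx]; ring
  rw [integral_mul_primitive_eq_integral_mul_integral hab hh' hφ hM hbound, hswapped,
    intervalIntegral.integral_sub (hφ.const_mul _) hφh, intervalIntegral.integral_const_mul]
  ring

end IntegrationByParts

theorem continuousOn_of_eq_add_integral {g G : ℝ → ℝ} {a b c : ℝ} (hab : a ≤ b)
    (hg : IntervalIntegrable g volume a b) (hG : ∀ x ∈ Icc a b, G x = c + ∫ t in a..x, g t) :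
    ContinuousOn G (Icc a b) := by
  have h := intervalIntegral.continuousOn_primitive_interval (μ := volume) (f := g) (a := a)
    (b := b) (by
      rw [uIcc_of_le hab]; exact (intervalIntegrable_iff_integrableOn_Icc_of_le hab).1 hg)
  rw [uIcc_of_le hab] at h
  exact (continuousOn_const.add h).congr hG

theorem eq_integral_of_eq_add_integral {f g : ℝ → ℝ} {a b c : ℝ}
    (hg : IntervalIntegrable g volume a b)
    (hf : ∀ x ∈ Icc a b, f x = f a + ∫ t in a..x, g t) (hc : c ∈ Icc a b) (hfc : f c = 0)
    {x : ℝ} (hx : x ∈ Icc a b) : f x = ∫ t in c..x, g t := by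
  have hsub : ∀ y ∈ Icc a b, uIcc a y ⊆ uIcc a b := fun y hy =>
    uIcc_subset_uIcc_left (mem_uIcc_of_le hy.1 hy.2)
  rw [← intervalIntegral.integral_interval_sub_left (hg.mono_set (hsub x hx))
    (hg.mono_set (hsub c hc)), hf x hx]
  linarith [hf c hc]

theorem integral_neg_one_one_eq {F : ℝ → ℝ} (h₁ : IntervalIntegrable F volume 0 1)
    (h₂ : IntervalIntegrable (fun x => F (-x)) volume 0 1) :
    ∫ x in (-1:ℝ)..1, F x = (∫ x in (0:ℝ)..1, F x) + ∫ x in (0:ℝ)..1, F (-x) := by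
  have hL : IntervalIntegrable F volume (-1) 0 := by
    simpa using ((IntervalIntegrable.iff_comp_neg (f := fun x => F (-x))).1 h₂).symm
  rw [← intervalIntegral.integral_add_adjacent_intervals hL h₁, intervalIntegral.integral_comp_neg]
  simp only [neg_zero, add_comm]

theorem continuousOn_rpow_Ioc (r : ℝ) : ContinuousOn (fun x : ℝ => x ^ r) (Ioc 0 1) :=
  continuousOn_id.rpow_const fun _ hx => Or.inl hx.1.ne'

theorem intervalIntegrable_of_abs_le_rpow {f : ℝ → ℝ} {C r : ℝ} (hr : -1 < r)
    (hf : ContinuousOn f (Ioc 0 1)) (hle : ∀ x ∈ Ioc (0:ℝ) 1, |f x| ≤ C * x ^ r) :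
    IntervalIntegrable f volume 0 1 := by
  rw [intervalIntegrable_iff_integrableOn_Ioc_of_le zero_le_one]
  exact ((intervalIntegral.intervalIntegrable_rpow' hr).1.const_mul C).mono'
    (hf.aestronglyMeasurable measurableSet_Ioc) ((ae_restrict_iff' measurableSet_Ioc).2 <|
      ae_of_all _ fun x hx => (Real.norm_eq_abs _).trans_le (hle x hx))

theorem integral_mul_rpow_sub_one {x : ℝ} (hx : 0 < x) (q : ℝ) :
    ∫ t in x..1, q * t ^ (q - 1) = 1 ^ q - x ^ q := by
  have hpos : ∀ t ∈ uIcc x 1, 0 < t := fun t ht => (lt_inf_iff.2 ⟨hx, one_pos⟩).trans_le ht.1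
  exact intervalIntegral.integral_eq_sub_of_hasDerivAt (f := fun t => t ^ q)
    (fun t ht => hasDerivAt_rpow_const (Or.inl (hpos t ht).ne'))
    (continuousOn_const.mul (continuousOn_id.rpow_const fun t ht =>
      Or.inl (hpos t ht).ne')).intervalIntegrable

/-- `u` lies in `H̃²₀(0,1)` with derivatives `u'`, `u''`: both are primitives taken from `0`,
which encodes `u(0) = u'(0) = 0`. -/
structure IsH2Zero (u u' u'' : ℝ → ℝ) : Prop where
  intervalIntegrable : IntervalIntegrable u'' volume 0 1
  intervalIntegrable_sq : IntervalIntegrable (fun x => u'' x ^ 2) volume 0 1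
  deriv_eq : ∀ x ∈ Icc (0:ℝ) 1, u' x = ∫ t in (0:ℝ)..x, u'' t
  eq : ∀ x ∈ Icc (0:ℝ) 1, u x = ∫ t in (0:ℝ)..x, u' t

/-- The constant `C` in `∫₀ˣ |u''| ≤ C √x`, from integrating `√x |a| ≤ (x a² + 1) / 2`. -/
noncomputable def l2Const (g : ℝ → ℝ) : ℝ := ((∫ t in (0:ℝ)..1, g t ^ 2) + 1) / 2

theorem l2Const_nonneg (g : ℝ → ℝ) : 0 ≤ l2Const g := by
  have : 0 ≤ ∫ t in (0:ℝ)..1, g t ^ 2 :=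
    intervalIntegral.integral_nonneg zero_le_one fun _ _ => sq_nonneg _
  rw [l2Const]; positivity

namespace IsH2Zero

variable {u u' u'' : ℝ → ℝ} (hu : IsH2Zero u u' u'')
include hu

theorem continuousOn_deriv : ContinuousOn u' (Icc 0 1) :=
  continuousOn_of_eq_add_integral zero_le_one hu.intervalIntegrable (c := 0)
    (by simpa using hu.deriv_eq)

theorem intervalIntegrable_deriv : IntervalIntegrable u' volume 0 1 :=
  hu.continuousOn_deriv.intervalIntegrable_of_Icc zero_le_one

theorem intervalIntegrable_deriv_sq : IntervalIntegrable (fun x => u' x ^ 2) volume 0 1 :=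
  (hu.continuousOn_deriv.pow 2).intervalIntegrable_of_Icc zero_le_one

theorem continuousOn : ContinuousOn u (Icc 0 1) :=
  continuousOn_of_eq_add_integral zero_le_one hu.intervalIntegrable_deriv (c := 0)
    (by simpa using hu.eq)

theorem intervalIntegrable_mul_self : IntervalIntegrable (fun x => u'' x * u x) volume 0 1 :=
  hu.intervalIntegrable.mul_continuousOn (by rw [uIcc_of_le zero_le_one]; exact hu.continuousOn)

theorem hasDerivAt {x : ℝ} (hx : x ∈ Ioo (0:ℝ) 1) : HasDerivAt u (u' x) x := by
  have hnhds : Icc (0:ℝ) 1 ∈ 𝓝 x := Icc_mem_nhds hx.1 hx.2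
  have hprim : HasDerivAt (fun y => ∫ t in (0:ℝ)..y, u' t) (u' x) x :=
    intervalIntegral.integral_hasDerivAt_right
      (hu.intervalIntegrable_deriv.mono_set
        (uIcc_subset_uIcc_left (mem_uIcc_of_le hx.1.le hx.2.le)))
      ((hu.continuousOn_deriv.mono Ioo_subset_Icc_self).stronglyMeasurableAtFilter isOpen_Ioo x hx)
      (hu.continuousOn_deriv.continuousAt hnhds)
  exact hprim.congr_of_eventuallyEq (eventuallyEq_of_mem hnhds hu.eq)

theorem integral_deriv_eq_sub {x : ℝ} (hx : x ∈ Icc (0:ℝ) 1) :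
    ∫ t in x..1, u' t = u 1 - u x := by
  rw [hu.eq 1 (right_mem_Icc.2 zero_le_one), hu.eq x hx,
    intervalIntegral.integral_interval_sub_left hu.intervalIntegrable_deriv
      (hu.intervalIntegrable_deriv.mono_set (uIcc_subset_uIcc_left (mem_uIcc_of_le hx.1 hx.2)))]

theorem integral_abs_le {x : ℝ} (hx : x ∈ Ioc (0:ℝ) 1) :
    ∫ t in (0:ℝ)..x, |u'' t| ≤ l2Const u'' * x ^ (1/2 : ℝ) := by
  set s := x ^ (1/2 : ℝ)
  have hs : 0 < s := rpow_pos_of_pos hx.1 _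
  have hss : s * s = x := by rw [← rpow_add hx.1]; norm_num
  have hsub : uIcc (0:ℝ) x ⊆ uIcc 0 1 := uIcc_subset_uIcc_left (mem_uIcc_of_le hx.1.le hx.2)
  have hsq : IntervalIntegrable (fun t => u'' t ^ 2) volume 0 x :=
    hu.intervalIntegrable_sq.mono_set hsub
  have hamgm : 2 * s * ∫ t in (0:ℝ)..x, |u'' t| ≤ x * ((∫ t in (0:ℝ)..x, u'' t ^ 2) + 1) := by
    rw [← intervalIntegral.integral_const_mul]
    calc ∫ t in (0:ℝ)..x, 2 * s * |u'' t| ≤ ∫ t in (0:ℝ)..x, (x * u'' t ^ 2 + 1) :=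
          intervalIntegral.integral_mono_on hx.1.le
            ((hu.intervalIntegrable.mono_set hsub).abs.const_mul _)
            ((hsq.const_mul x).add intervalIntegrable_const) fun t _ => by
              nlinarith [sq_nonneg (s * |u'' t| - 1), sq_abs (u'' t)]
      _ = x * ((∫ t in (0:ℝ)..x, u'' t ^ 2) + 1) := by
          rw [intervalIntegral.integral_add (hsq.const_mul x) intervalIntegrable_const,
            intervalIntegral.integral_const_mul, intervalIntegral.integral_const, smul_eq_mul,
            sub_zero]
          ring
  have hmono : ∫ t in (0:ℝ)..x, u'' t ^ 2 ≤ ∫ t in (0:ℝ)..1, u'' t ^ 2 :=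
    intervalIntegral.integral_mono_interval le_rfl hx.1.le hx.2
      (ae_of_all _ fun t => sq_nonneg _) hu.intervalIntegrable_sq
  refine le_of_mul_le_mul_left (a := 2 * s) ?_ (by positivity)
  calc 2 * s * ∫ t in (0:ℝ)..x, |u'' t| ≤ x * ((∫ t in (0:ℝ)..x, u'' t ^ 2) + 1) := hamgm
    _ ≤ x * ((∫ t in (0:ℝ)..1, u'' t ^ 2) + 1) := by gcongr; exact hx.1.le
    _ = 2 * s * (l2Const u'' * s) := by rw [l2Const, ← hss]; ring

theorem abs_deriv_le {x : ℝ} (hx : x ∈ Ioc (0:ℝ) 1) :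
    |u' x| ≤ l2Const u'' * x ^ (1/2 : ℝ) := by
  rw [hu.deriv_eq x (Ioc_subset_Icc_self hx)]
  exact (intervalIntegral.abs_integral_le_integral_abs hx.1.le).trans (hu.integral_abs_le hx)

theorem integral_abs_deriv_le {x : ℝ} (hx : x ∈ Ioc (0:ℝ) 1) :
    ∫ t in (0:ℝ)..x, |u' t| ≤ l2Const u'' * x ^ (3/2 : ℝ) := by
  calc ∫ t in (0:ℝ)..x, |u' t| ≤ ∫ t in (0:ℝ)..x, l2Const u'' * x ^ (1/2 : ℝ) :=
        intervalIntegral.integral_mono_on_of_le_Ioo hx.1.le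
          (hu.intervalIntegrable_deriv.mono_set
            (uIcc_subset_uIcc_left (mem_uIcc_of_le hx.1.le hx.2))).abs
          intervalIntegrable_const fun t ht =>
            (hu.abs_deriv_le ⟨ht.1, ht.2.le.trans hx.2⟩).trans <| by
              gcongr; exacts [l2Const_nonneg _, ht.1.le, ht.2.le]
    _ = l2Const u'' * x ^ (3/2 : ℝ) := by
        rw [intervalIntegral.integral_const, smul_eq_mul, sub_zero,
          show (3/2 : ℝ) = 1 + 1/2 by norm_num, rpow_add hx.1, rpow_one]
        ring

theorem abs_le {x : ℝ} (hx : x ∈ Ioc (0:ℝ) 1) : |u x| ≤ l2Const u'' * x ^ (3/2 : ℝ) := by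
  rw [hu.eq x (Ioc_subset_Icc_self hx)]
  exact (intervalIntegral.abs_integral_le_integral_abs hx.1.le).trans
    (hu.integral_abs_deriv_le hx)

theorem sq_le {x : ℝ} (hx : x ∈ Ioc (0:ℝ) 1) : u x ^ 2 ≤ l2Const u'' ^ 2 * x ^ 3 := by
  calc u x ^ 2 = |u x| ^ 2 := (sq_abs _).symm
    _ ≤ (l2Const u'' * x ^ (3/2 : ℝ)) ^ 2 := pow_le_pow_left₀ (abs_nonneg _) (hu.abs_le hx) 2
    _ = l2Const u'' ^ 2 * x ^ 3 := by
        rw [mul_pow, ← rpow_natCast (x ^ (3/2 : ℝ)), ← rpow_mul hx.1.le]; norm_num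

theorem abs_mul_deriv_le {x : ℝ} (hx : x ∈ Ioc (0:ℝ) 1) :
    |u x * u' x| ≤ l2Const u'' ^ 2 * x ^ 2 := by
  rw [abs_mul]
  calc |u x| * |u' x| ≤ l2Const u'' * x ^ (3/2 : ℝ) * (l2Const u'' * x ^ (1/2 : ℝ)) :=
        mul_le_mul (hu.abs_le hx) (hu.abs_deriv_le hx) (abs_nonneg _)
          (mul_nonneg (l2Const_nonneg _) (rpow_nonneg hx.1.le _))
    _ = l2Const u'' ^ 2 * x ^ 2 := by
        rw [mul_mul_mul_comm, ← rpow_add hx.1, show (3/2 : ℝ) + 1/2 = 2 by norm_num, rpow_two]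
        ring

theorem intervalIntegrable_mul_rpow {p : ℝ} (hp : -1/2 < p) :
    IntervalIntegrable (fun x => u'' x * x ^ p) volume 0 1 := by
  have hmaj : IntervalIntegrable (fun x => (u'' x ^ 2 + x ^ (2 * p)) / 2) volume 0 1 :=
    (hu.intervalIntegrable_sq.add
      (intervalIntegral.intervalIntegrable_rpow' (by linarith))).div_const 2
  refine hmaj.mono_fun' ?_ ((ae_restrict_iff' measurableSet_uIoc).2 (ae_of_all _ fun x hx => ?_))
  · rw [uIoc_of_le zero_le_one]
    exact hu.intervalIntegrable.1.aestronglyMeasurable.mul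
      ((continuousOn_rpow_Ioc p).aestronglyMeasurable measurableSet_Ioc)
  · rw [uIoc_of_le zero_le_one] at hx
    have hxp : x ^ (2 * p) = (x ^ p) ^ 2 := by
      rw [← rpow_natCast, ← rpow_mul hx.1.le]; ring_nf
    simp only [Real.norm_eq_abs, abs_mul, abs_of_nonneg (rpow_nonneg hx.1.le p), hxp]
    nlinarith [sq_nonneg (|u'' x| - x ^ p), sq_abs (u'' x)]

theorem intervalIntegrable_deriv_mul_rpow {p : ℝ} (hp : -1/2 < p) :
    IntervalIntegrable (fun x => u' x * x ^ (p - 1)) volume 0 1 := by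
  refine intervalIntegrable_of_abs_le_rpow (C := l2Const u'') (r := p - 1/2) (by linarith)
    ((hu.continuousOn_deriv.mono Ioc_subset_Icc_self).mul (continuousOn_rpow_Ioc _))
    fun x hx => ?_
  rw [abs_mul, abs_of_nonneg (rpow_nonneg hx.1.le _)]
  calc |u' x| * x ^ (p - 1) ≤ l2Const u'' * x ^ (1/2 : ℝ) * x ^ (p - 1) :=
        mul_le_mul_of_nonneg_right (hu.abs_deriv_le hx) (rpow_nonneg hx.1.le _)
    _ = l2Const u'' * x ^ (p - 1/2) := by rw [mul_assoc, ← rpow_add hx.1]; ring_nf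

theorem intervalIntegrable_mul_rpow_sub_two {p : ℝ} (hp : -1/2 < p) :
    IntervalIntegrable (fun x => u x * x ^ (p - 2)) volume 0 1 := by
  refine intervalIntegrable_of_abs_le_rpow (C := l2Const u'') (r := p - 1/2) (by linarith)
    ((hu.continuousOn.mono Ioc_subset_Icc_self).mul (continuousOn_rpow_Ioc _)) fun x hx => ?_
  rw [abs_mul, abs_of_nonneg (rpow_nonneg hx.1.le _)]
  calc |u x| * x ^ (p - 2) ≤ l2Const u'' * x ^ (3/2 : ℝ) * x ^ (p - 2) :=
        mul_le_mul_of_nonneg_right (hu.abs_le hx) (rpow_nonneg hx.1.le _)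
    _ = l2Const u'' * x ^ (p - 1/2) := by rw [mul_assoc, ← rpow_add hx.1]; ring_nf

theorem intervalIntegrable_sq_div_sq :
    IntervalIntegrable (fun x => u x ^ 2 / x ^ 2) volume 0 1 :=
  intervalIntegrable_of_abs_le_rpow (C := l2Const u'' ^ 2) (r := 1) (by norm_num)
    (((hu.continuousOn.mono Ioc_subset_Icc_self).pow 2).div (continuousOn_pow 2)
      fun x hx => pow_ne_zero 2 hx.1.ne') fun x hx => by
    rw [abs_of_nonneg (by positivity), rpow_one, div_le_iff₀ (by positivity [hx.1])]
    nlinarith [hu.sq_le hx]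

theorem intervalIntegrable_mul_deriv_div :
    IntervalIntegrable (fun x => 2 * (u x * u' x) / x) volume 0 1 :=
  intervalIntegrable_of_abs_le_rpow (C := 2 * l2Const u'' ^ 2) (r := 1) (by norm_num)
    ((continuousOn_const.mul ((hu.continuousOn.mono Ioc_subset_Icc_self).mul
      (hu.continuousOn_deriv.mono Ioc_subset_Icc_self))).div continuousOn_id
      fun x hx => hx.1.ne') fun x hx => by
    rw [abs_div, abs_mul, abs_two, abs_of_pos hx.1, rpow_one, div_le_iff₀ hx.1]
    nlinarith [hu.abs_mul_deriv_le hx]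

theorem integral_mul_self_eq :
    ∫ x in (0:ℝ)..1, u'' x * u x = u' 1 * u 1 - ∫ x in (0:ℝ)..1, u' x ^ 2 := by
  have hbound : ∀ x ∈ Ioc (0:ℝ) 1,
      |u' x| * ∫ t in (0:ℝ)..x, |u'' t| ≤ l2Const u'' ^ 2 * x ^ (1 : ℝ) := by
    intro x hx
    calc |u' x| * ∫ t in (0:ℝ)..x, |u'' t|
        ≤ l2Const u'' * x ^ (1/2 : ℝ) * (l2Const u'' * x ^ (1/2 : ℝ)) :=
          mul_le_mul (hu.abs_deriv_le hx) (hu.integral_abs_le hx)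
            (intervalIntegral.integral_nonneg hx.1.le fun _ _ => abs_nonneg _)
            (mul_nonneg (l2Const_nonneg _) (rpow_nonneg hx.1.le _))
      _ = l2Const u'' ^ 2 * x ^ (1 : ℝ) := by
          rw [mul_mul_mul_comm, ← rpow_add hx.1, show (1/2 : ℝ) + 1/2 = 1 by norm_num]; ring
  rw [integral_mul_eq_sub_integral_deriv_mul_primitive zero_le_one
      ((hu.continuousOn_deriv.mono Ioc_subset_Icc_self).aestronglyMeasurable measurableSet_Ioc)
      hu.intervalIntegrable
      ((intervalIntegral.intervalIntegrable_rpow' (by norm_num)).1.const_mul _)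
      hbound hu.intervalIntegrable_mul_self
      fun x hx => hu.integral_deriv_eq_sub (Ioc_subset_Icc_self hx),
    ← hu.deriv_eq 1 (right_mem_Icc.2 zero_le_one)]
  congr 1
  · ring
  refine intervalIntegral.integral_congr fun x hx => ?_
  rw [uIcc_of_le zero_le_one] at hx
  simp only [← hu.deriv_eq x hx, sq]

theorem integral_mul_rpow_eq {p : ℝ} (hp : -1/2 < p) :
    ∫ x in (0:ℝ)..1, u'' x * x ^ p = u' 1 - p * ∫ x in (0:ℝ)..1, u' x * x ^ (p - 1) := by
  have hbound : ∀ x ∈ Ioc (0:ℝ) 1,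
      |p * x ^ (p - 1)| * ∫ t in (0:ℝ)..x, |u'' t| ≤ |p| * l2Const u'' * x ^ (p - 1/2) := by
    intro x hx
    rw [abs_mul, abs_of_nonneg (rpow_nonneg hx.1.le _)]
    calc |p| * x ^ (p - 1) * ∫ t in (0:ℝ)..x, |u'' t|
        ≤ |p| * x ^ (p - 1) * (l2Const u'' * x ^ (1/2 : ℝ)) :=
          mul_le_mul_of_nonneg_left (hu.integral_abs_le hx)
            (mul_nonneg (abs_nonneg _) (rpow_nonneg hx.1.le _))
      _ = |p| * l2Const u'' * x ^ (p - 1/2) := by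
          rw [show p - 1/2 = (p - 1) + 1/2 by ring, rpow_add hx.1]; ring
  rw [integral_mul_eq_sub_integral_deriv_mul_primitive (h := fun x => x ^ p)
      (h' := fun x => p * x ^ (p - 1)) zero_le_one
      ((continuousOn_const.mul (continuousOn_rpow_Ioc _)).aestronglyMeasurable measurableSet_Ioc)
      hu.intervalIntegrable
      ((intervalIntegral.intervalIntegrable_rpow' (by linarith)).1.const_mul _) hbound
      (hu.intervalIntegrable_mul_rpow hp) fun x hx => integral_mul_rpow_sub_one hx.1 p,
    ← hu.deriv_eq 1 (right_mem_Icc.2 zero_le_one), one_rpow, one_mul,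
    ← intervalIntegral.integral_const_mul]
  congr 1
  refine intervalIntegral.integral_congr fun x hx => ?_
  rw [uIcc_of_le zero_le_one] at hx
  simp only [← hu.deriv_eq x hx]; ring

theorem integral_deriv_mul_rpow_eq {p : ℝ} (hp : -1/2 < p) :
    ∫ x in (0:ℝ)..1, u' x * x ^ (p - 1)
      = u 1 - (p - 1) * ∫ x in (0:ℝ)..1, u x * x ^ (p - 2) := by
  have hbound : ∀ x ∈ Ioc (0:ℝ) 1, |(p - 1) * x ^ (p - 1 - 1)| * ∫ t in (0:ℝ)..x, |u' t|
      ≤ |p - 1| * l2Const u'' * x ^ (p - 1/2) := by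
    intro x hx
    rw [abs_mul, abs_of_nonneg (rpow_nonneg hx.1.le _)]
    calc |p - 1| * x ^ (p - 1 - 1) * ∫ t in (0:ℝ)..x, |u' t|
        ≤ |p - 1| * x ^ (p - 1 - 1) * (l2Const u'' * x ^ (3/2 : ℝ)) :=
          mul_le_mul_of_nonneg_left (hu.integral_abs_deriv_le hx)
            (mul_nonneg (abs_nonneg _) (rpow_nonneg hx.1.le _))
      _ = |p - 1| * l2Const u'' * x ^ (p - 1/2) := by
          rw [show p - 1/2 = (p - 1 - 1) + 3/2 by ring, rpow_add hx.1]; ring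
  rw [integral_mul_eq_sub_integral_deriv_mul_primitive (h := fun x => x ^ (p - 1))
      (h' := fun x => (p - 1) * x ^ (p - 1 - 1)) zero_le_one
      ((continuousOn_const.mul (continuousOn_rpow_Ioc _)).aestronglyMeasurable measurableSet_Ioc)
      hu.intervalIntegrable_deriv
      ((intervalIntegral.intervalIntegrable_rpow' (by linarith)).1.const_mul _) hbound
      (hu.intervalIntegrable_deriv_mul_rpow hp)
      fun x hx => integral_mul_rpow_sub_one hx.1 (p - 1),
    ← hu.eq 1 (right_mem_Icc.2 zero_le_one), one_rpow, one_mul,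
    ← intervalIntegral.integral_const_mul]
  congr 1
  refine intervalIntegral.integral_congr fun x hx => ?_
  rw [uIcc_of_le zero_le_one] at hx
  simp only [← hu.eq x hx, show p - 1 - 1 = p - 2 by ring]; ring

theorem intervalIntegrable_regular (c : ℝ) :
    IntervalIntegrable (fun x => -(u'' x * u x) + c * (u x ^ 2 / x ^ 2)) volume 0 1 :=
  hu.intervalIntegrable_mul_self.neg.add (hu.intervalIntegrable_sq_div_sq.const_mul c)

theorem integral_regular_eq (c : ℝ) :
    ∫ x in (0:ℝ)..1, (-(u'' x * u x) + c * (u x ^ 2 / x ^ 2))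
      = (∫ x in (0:ℝ)..1, u' x ^ 2) - u' 1 * u 1 + c * ∫ x in (0:ℝ)..1, u x ^ 2 / x ^ 2 := by
  rw [intervalIntegral.integral_add (f := fun x => -(u'' x * u x))
      hu.intervalIntegrable_mul_self.neg (hu.intervalIntegrable_sq_div_sq.const_mul c),
    intervalIntegral.integral_neg, intervalIntegral.integral_const_mul, hu.integral_mul_self_eq]
  ring

theorem intervalIntegrable_singular {p : ℝ} (hp : -1/2 < p) :
    IntervalIntegrable (fun x => -(u'' x * x ^ p) + p * (p - 1) * (u x * x ^ (p - 2)))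
      volume 0 1 :=
  (hu.intervalIntegrable_mul_rpow hp).neg.add
    ((hu.intervalIntegrable_mul_rpow_sub_two hp).const_mul _)

theorem integral_singular_eq {p : ℝ} (hp : -1/2 < p) :
    ∫ x in (0:ℝ)..1, (-(u'' x * x ^ p) + p * (p - 1) * (u x * x ^ (p - 2)))
      = p * u 1 - u' 1 := by
  rw [intervalIntegral.integral_add (f := fun x => -(u'' x * x ^ p))
      (g := fun x => p * (p - 1) * (u x * x ^ (p - 2))) (hu.intervalIntegrable_mul_rpow hp).neg
      ((hu.intervalIntegrable_mul_rpow_sub_two hp).const_mul _),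
    intervalIntegral.integral_neg, intervalIntegral.integral_const_mul,
    hu.integral_mul_rpow_eq hp, hu.integral_deriv_mul_rpow_eq hp]
  ring

theorem continuousOn_sq_div : ContinuousOn (fun x => u x ^ 2 / x) (Icc 0 1) := by
  intro x hx
  rcases hx.1.eq_or_lt with rfl | hx0
  · have hlim : Tendsto (fun y => l2Const u'' ^ 2 * y ^ 2) (𝓝[Icc 0 1] 0) (𝓝 0) := by
      have h := ((continuous_pow 2).tendsto (0:ℝ)).const_mul (l2Const u'' ^ 2)
      rw [zero_pow two_ne_zero, mul_zero] at h
      exact h.mono_left nhdsWithin_le_nhds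
    simp only [ContinuousWithinAt, div_zero]
    refine squeeze_zero_norm' (eventually_nhdsWithin_of_forall fun y hy => ?_) hlim
    rcases hy.1.eq_or_lt with rfl | hy0
    · simp
    rw [Real.norm_eq_abs, abs_of_nonneg (div_nonneg (sq_nonneg _) hy0.le), div_le_iff₀ hy0]
    nlinarith [hu.sq_le ⟨hy0, hy.2⟩]
  · exact ((hu.continuousOn x hx).pow 2).div continuousWithinAt_id hx0.ne'

/-- Hardy's inequality, from `(u²/x)' = 2uu'/x - u²/x²` and `2uu'/x ≤ u²/(2x²) + 2u'²`. -/
theorem integral_sq_div_sq_le :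
    ∫ x in (0:ℝ)..1, u x ^ 2 / x ^ 2 ≤ 4 * ∫ x in (0:ℝ)..1, u' x ^ 2 := by
  have hderiv : ∀ x ∈ Ioo (0:ℝ) 1, HasDerivAt (fun x => u x ^ 2 / x)
      (2 * (u x * u' x) / x - u x ^ 2 / x ^ 2) x := fun x hx =>
    (((hu.hasDerivAt hx).pow 2).div (hasDerivAt_id x) hx.1.ne').congr_deriv (by
      simp only [id, Pi.pow_apply]; field_simp; ring)
  have hftc := intervalIntegral.integral_eq_sub_of_hasDerivAt_of_le zero_le_one
    hu.continuousOn_sq_div hderiv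
    (hu.intervalIntegrable_mul_deriv_div.sub hu.intervalIntegrable_sq_div_sq)
  have hamgm : ∫ x in (0:ℝ)..1, 2 * (u x * u' x) / x
      ≤ ∫ x in (0:ℝ)..1, (1/2 * (u x ^ 2 / x ^ 2) + 2 * u' x ^ 2) := by
    refine intervalIntegral.integral_mono_on_of_le_Ioo zero_le_one
      hu.intervalIntegrable_mul_deriv_div ((hu.intervalIntegrable_sq_div_sq.const_mul _).add
        (hu.intervalIntegrable_deriv_sq.const_mul _)) fun x hx => ?_
    rw [← div_pow, show 2 * (u x * u' x) / x = 2 * (u x / x) * u' x by ring]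
    nlinarith [sq_nonneg (u x / x - 2 * u' x)]
  rw [intervalIntegral.integral_sub hu.intervalIntegrable_mul_deriv_div
    hu.intervalIntegrable_sq_div_sq] at hftc
  rw [intervalIntegral.integral_add (hu.intervalIntegrable_sq_div_sq.const_mul _)
      (hu.intervalIntegrable_deriv_sq.const_mul _),
    intervalIntegral.integral_const_mul, intervalIntegral.integral_const_mul] at hamgm
  simp only [div_one, div_zero, sub_zero] at hftc
  nlinarith [sq_nonneg (u 1)]

end IsH2Zero

theorem isH2Zero_and_isH2Zero_comp_neg {u u' u'' : ℝ → ℝ}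
    (h2 : IntervalIntegrable u'' volume (-1) 1)
    (h2sq : IntervalIntegrable (fun x => u'' x ^ 2) volume (-1) 1)
    (hu : ∀ x ∈ Icc (-1:ℝ) 1, u x = u (-1) + ∫ t in (-1:ℝ)..x, u' t)
    (hu' : ∀ x ∈ Icc (-1:ℝ) 1, u' x = u' (-1) + ∫ t in (-1:ℝ)..x, u'' t)
    (h0 : u 0 = 0) (h0' : u' 0 = 0) :
    IsH2Zero u u' u'' ∧ IsH2Zero (fun x => u (-x)) (fun x => -u' (-x)) (fun x => u'' (-x)) := by
  have hmem : (0:ℝ) ∈ Icc (-1) 1 := ⟨by norm_num, by norm_num⟩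
  have hu'_int : IntervalIntegrable u' volume (-1) 1 :=
    (continuousOn_of_eq_add_integral (by norm_num) h2 hu').intervalIntegrable_of_Icc (by norm_num)
  have hu'0 := fun x hx => eq_integral_of_eq_add_integral h2 hu' hmem h0' (x := x) hx
  have hu0 := fun x hx => eq_integral_of_eq_add_integral hu'_int hu hmem h0 (x := x) hx
  have hR : uIcc (0:ℝ) 1 ⊆ uIcc (-1) 1 := uIcc_subset_uIcc (by simp) (by simp)
  have hL : uIcc (0:ℝ) (-1) ⊆ uIcc (-1) 1 := uIcc_subset_uIcc (by simp) (by simp)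
  have hIcc : Icc (0:ℝ) 1 ⊆ Icc (-1) 1 := Icc_subset_Icc (by norm_num) le_rfl
  have hneg : ∀ x ∈ Icc (0:ℝ) 1, -x ∈ Icc (-1:ℝ) 1 := fun x hx =>
    ⟨by linarith [hx.2], by linarith [hx.1]⟩
  refine ⟨⟨h2.mono_set hR, h2sq.mono_set hR, fun x hx => hu'0 x (hIcc hx),
    fun x hx => hu0 x (hIcc hx)⟩,
    ⟨by simpa using (IntervalIntegrable.iff_comp_neg (f := u'')).1 (h2.mono_set hL),
    by simpa using (IntervalIntegrable.iff_comp_neg (f := fun x => u'' x ^ 2)).1 (h2sq.mono_set hL),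
    fun x hx => ?_, fun x hx => ?_⟩⟩
  · rw [intervalIntegral.integral_comp_neg, hu'0 (-x) (hneg x hx), neg_zero,
      intervalIntegral.integral_symm, neg_neg]
  · rw [intervalIntegral.integral_neg, intervalIntegral.integral_comp_neg, hu0 (-x) (hneg x hx),
      neg_zero, intervalIntegral.integral_symm]

/-- The integrand `(Aₙ f) f`, for `f` with regular part `u` and `K = (nπ)²`. -/
noncomputable def formDensity (ν γ K : ℝ) (u u'' f : ℝ → ℝ) (x : ℝ) : ℝ :=
  (-(u'' x) + ((ν ^ 2 - 1/4) / x ^ 2) * u x + K * |x| ^ (2*γ) * f x) * f x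

theorem formDensity_neg (ν γ K : ℝ) (u u'' f : ℝ → ℝ) (x : ℝ) :
    formDensity ν γ K u u'' f (-x)
      = formDensity ν γ K (fun x => u (-x)) (fun x => u'' (-x)) (fun x => f (-x)) x := by
  simp only [formDensity, neg_sq, abs_neg]

theorem eqOn_formDensity {ν γ K A₁ A₂ : ℝ} {u u'' s : ℝ → ℝ}
    (hs : ∀ x ∈ Ioc (0:ℝ) 1, s x = A₁ * x ^ (ν + 1/2) + A₂ * x ^ (-ν + 1/2)) :
    EqOn (formDensity ν γ K u u'' (fun x => u x + s x))
      (fun x => (-(u'' x * u x) + (ν ^ 2 - 1/4) * (u x ^ 2 / x ^ 2))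
        + A₁ * (-(u'' x * x ^ (ν + 1/2))
          + (ν + 1/2) * (ν + 1/2 - 1) * (u x * x ^ (ν + 1/2 - 2)))
        + A₂ * (-(u'' x * x ^ (-ν + 1/2))
          + (-ν + 1/2) * (-ν + 1/2 - 1) * (u x * x ^ (-ν + 1/2 - 2)))
        + K * (|x| ^ (2*γ) * (u x + s x) ^ 2)) (uIoc 0 1) := by
  intro x hx
  rw [uIoc_of_le zero_le_one] at hx
  have hx0 : x ≠ 0 := hx.1.ne'
  simp only [formDensity, hs x hx, rpow_sub hx.1, rpow_two]
  field_simp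
  ring

theorem min_one_mul_le_add_mul {ν D H : ℝ} (hD : 0 ≤ D) (hH : 0 ≤ H) (hHD : H ≤ 4 * D) :
    min 1 (4 * ν ^ 2) * D ≤ D + (ν ^ 2 - 1/4) * H := by
  rcases le_total 0 (ν ^ 2 - 1/4) with hc | hc
  · nlinarith [mul_le_mul_of_nonneg_right (min_le_left 1 (4 * ν ^ 2)) hD, mul_nonneg hc hH]
  · nlinarith [mul_le_mul_of_nonneg_right (min_le_right 1 (4 * ν ^ 2)) hD,
      mul_le_mul_of_nonpos_left hHD hc]

section OneSided

variable {ν γ K A₁ A₂ : ℝ} {u u' u'' s : ℝ → ℝ} (hu : IsH2Zero u u' u'')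
  (hs : ∀ x ∈ Ioc (0:ℝ) 1, s x = A₁ * x ^ (ν + 1/2) + A₂ * x ^ (-ν + 1/2))
include hu hs

theorem continuousOn_add_singular : ContinuousOn (fun x => u x + s x) (Ioc 0 1) :=
  (hu.continuousOn.mono Ioc_subset_Icc_self).add <|
    ((continuousOn_const.mul (continuousOn_rpow_Ioc _)).add
      (continuousOn_const.mul (continuousOn_rpow_Ioc _))).congr hs

theorem abs_add_singular_le (hν : 0 ≤ ν) {x : ℝ} (hx : x ∈ Ioc (0:ℝ) 1) :
    |u x + s x| ≤ (l2Const u'' + |A₁| + |A₂|) * x ^ (-ν + 1/2) := by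
  have hmono : ∀ q, -ν + 1/2 ≤ q → x ^ q ≤ x ^ (-ν + 1/2) := fun q hq =>
    rpow_le_rpow_of_exponent_ge hx.1 hx.2 hq
  have h₁ := hmono (3/2) (by linarith)
  have h₂ := hmono (ν + 1/2) (by linarith)
  rw [hs x hx]
  calc |u x + (A₁ * x ^ (ν + 1/2) + A₂ * x ^ (-ν + 1/2))|
      ≤ |u x| + |A₁| * x ^ (ν + 1/2) + |A₂| * x ^ (-ν + 1/2) := by
        refine (abs_add_le _ _).trans ?_
        rw [add_assoc]
        refine add_le_add_right ((abs_add_le _ _).trans ?_) _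
        rw [abs_mul, abs_mul, abs_of_nonneg (rpow_nonneg hx.1.le _),
          abs_of_nonneg (rpow_nonneg hx.1.le _)]
    _ ≤ l2Const u'' * x ^ (-ν + 1/2) + |A₁| * x ^ (-ν + 1/2) + |A₂| * x ^ (-ν + 1/2) := by
        gcongr
        exact (hu.abs_le hx).trans (mul_le_mul_of_nonneg_left h₁ (l2Const_nonneg _))
    _ = (l2Const u'' + |A₁| + |A₂|) * x ^ (-ν + 1/2) := by ring

theorem intervalIntegrable_weight (hν : ν ∈ Ioo (0:ℝ) 1) (hγ : 0 ≤ γ) :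
    IntervalIntegrable (fun x => |x| ^ (2*γ) * (u x + s x) ^ 2) volume 0 1 := by
  refine intervalIntegrable_of_abs_le_rpow (C := (l2Const u'' + |A₁| + |A₂|) ^ 2)
    (r := 1 - 2 * ν) (by linarith [hν.2])
    ((continuous_abs.continuousOn.rpow_const fun x _ => Or.inr (by positivity)).mul
      ((continuousOn_add_singular hu hs).pow 2)) fun x hx => ?_
  have hw : |x| ^ (2*γ) ≤ 1 := by
    rw [abs_of_pos hx.1]; exact rpow_le_one hx.1.le hx.2 (by positivity)
  rw [abs_of_nonneg (by positivity)]
  calc |x| ^ (2*γ) * (u x + s x) ^ 2 ≤ 1 * |u x + s x| ^ 2 := by rw [sq_abs]; gcongr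
    _ ≤ ((l2Const u'' + |A₁| + |A₂|) * x ^ (-ν + 1/2)) ^ 2 := by
        rw [one_mul]; gcongr; exact abs_add_singular_le hu hs hν.1.le hx
    _ = (l2Const u'' + |A₁| + |A₂|) ^ 2 * x ^ (1 - 2 * ν) := by
        rw [show 1 - 2 * ν = (-ν + 1/2) * (2 : ℕ) by push_cast; ring, rpow_mul_natCast hx.1.le]
        ring

theorem intervalIntegrable_formDensity (hν : ν ∈ Ioo (0:ℝ) 1) (hγ : 0 ≤ γ) :
    IntervalIntegrable (formDensity ν γ K u u'' (fun x => u x + s x)) volume 0 1 :=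
  (intervalIntegrable_congr (eqOn_formDensity hs)).2 <|
    (((hu.intervalIntegrable_regular _).add
      ((hu.intervalIntegrable_singular (p := ν + 1/2) (by linarith [hν.1])).const_mul A₁)).add
      ((hu.intervalIntegrable_singular (p := -ν + 1/2) (by linarith [hν.2])).const_mul A₂)).add
      ((intervalIntegrable_weight hu hs hν hγ).const_mul K)

theorem integral_formDensity_eq (hν : ν ∈ Ioo (0:ℝ) 1) (hγ : 0 ≤ γ) (hbc : u 1 + s 1 = 0) :
    ∫ x in (0:ℝ)..1, formDensity ν γ K u u'' (fun x => u x + s x) x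
      = (∫ x in (0:ℝ)..1, u' x ^ 2) + (ν ^ 2 - 1/4) * (∫ x in (0:ℝ)..1, u x ^ 2 / x ^ 2)
        + K * (∫ x in (0:ℝ)..1, |x| ^ (2*γ) * (u x + s x) ^ 2)
        - (A₁ + A₂) * ((ν + 1/2) * A₁ + (-ν + 1/2) * A₂) := by
  have hp₁ : -1/2 < ν + 1/2 := by linarith [hν.1]
  have hp₂ : -1/2 < -ν + 1/2 := by linarith [hν.2]
  have hs1 : s 1 = A₁ + A₂ := by simpa using hs 1 ⟨one_pos, le_rfl⟩
  rw [intervalIntegral.integral_congr_ae (ae_of_all _ (eqOn_formDensity hs)),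
    intervalIntegral.integral_add (((hu.intervalIntegrable_regular _).add
      ((hu.intervalIntegrable_singular hp₁).const_mul A₁)).add
      ((hu.intervalIntegrable_singular hp₂).const_mul A₂))
      ((intervalIntegrable_weight hu hs hν hγ).const_mul K),
    intervalIntegral.integral_add ((hu.intervalIntegrable_regular _).add
      ((hu.intervalIntegrable_singular hp₁).const_mul A₁))
      ((hu.intervalIntegrable_singular hp₂).const_mul A₂),
    intervalIntegral.integral_add (hu.intervalIntegrable_regular _)
      ((hu.intervalIntegrable_singular hp₁).const_mul A₁)]
  simp only [intervalIntegral.integral_const_mul]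
  rw [hu.integral_regular_eq, hu.integral_singular_eq hp₁, hu.integral_singular_eq hp₂]
  linear_combination ((ν + 1/2) * A₁ + (-ν + 1/2) * A₂ - u' 1) * (hbc - hs1)

theorem le_integral_formDensity (hν : ν ∈ Ioo (0:ℝ) 1) (hγ : 0 ≤ γ) (hbc : u 1 + s 1 = 0) :
    min 1 (4 * ν ^ 2) * (∫ x in (0:ℝ)..1, u' x ^ 2)
        + K * (∫ x in (0:ℝ)..1, |x| ^ (2*γ) * (u x + s x) ^ 2)
      ≤ (∫ x in (0:ℝ)..1, formDensity ν γ K u u'' (fun x => u x + s x) x)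
        + (A₁ + A₂) * ((ν + 1/2) * A₁ + (-ν + 1/2) * A₂) := by
  have hHardy := min_one_mul_le_add_mul (ν := ν)
    (intervalIntegral.integral_nonneg zero_le_one fun x _ => sq_nonneg (u' x))
    (intervalIntegral.integral_nonneg zero_le_one fun x _ => by positivity)
    hu.integral_sq_div_sq_le
  rw [integral_formDensity_eq hu hs hν hγ hbc]
  linarith

end OneSided

theorem An_coercive_general
    (ν : ℝ) (hν : ν ∈ Set.Ioo (0:ℝ) 1)
    (γ : ℝ) (hγ : 0 < γ) (n : ℕ)
    (fr fr' fr'' fs : ℝ → ℝ)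
    (a₁ a₂ b₁ b₂ : ℝ)
    -- regular part : H² on [-1,1] with f_r(0) = f_r'(0) = 0
    (hfr''int : IntervalIntegrable fr'' volume (-1) 1)
    (hfr''sq : IntervalIntegrable (fun x => fr'' x ^ 2) volume (-1) 1)
    (hfrFTC : ∀ x ∈ Set.Icc (-1:ℝ) 1, fr x = fr (-1) + ∫ t in (-1:ℝ)..x, fr' t)
    (hfr'FTC : ∀ x ∈ Set.Icc (-1:ℝ) 1, fr' x = fr' (-1) + ∫ t in (-1:ℝ)..x, fr'' t)
    (hfr0 : fr 0 = 0) (hfr'0 : fr' 0 = 0)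
    -- singular part
    (hfsP : ∀ x ∈ Set.Ioc (0:ℝ) 1,
        fs x = a₁ * |x| ^ (ν + 1/2) + a₂ * |x| ^ (-ν + 1/2))
    (hfsM : ∀ x ∈ Set.Ico (-1:ℝ) 0,
        fs x = b₁ * |x| ^ (ν + 1/2) + b₂ * |x| ^ (-ν + 1/2))
    -- transmission conditions
    (hfT1 : b₁ + b₂ + a₁ + a₂ = 0)
    (hfT2 : (ν + 1/2) * b₁ + (-ν + 1/2) * b₂ = (ν + 1/2) * a₁ + (-ν + 1/2) * a₂)
    -- Dirichlet boundary conditions at ±1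
    (hf1 : fr 1 + fs 1 = 0) (hfm1 : fr (-1) + fs (-1) = 0) :
    min 1 (4 * ν ^ 2) * (∫ x in (-1:ℝ)..1, fr' x ^ 2)
      + ((n : ℝ) * π) ^ 2 * (∫ x in (-1:ℝ)..1, |x| ^ (2*γ) * (fr x + fs x) ^ 2)
    ≤ ∫ x in (-1:ℝ)..1,
        (-(fr'' x) + ((ν ^ 2 - 1/4) / x ^ 2) * fr x
          + ((n : ℝ) * π) ^ 2 * |x| ^ (2*γ) * (fr x + fs x)) * (fr x + fs x) := by
  set K := ((n : ℝ) * π) ^ 2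
  obtain ⟨hR, hL⟩ := isH2Zero_and_isH2Zero_comp_neg hfr''int hfr''sq hfrFTC hfr'FTC hfr0 hfr'0
  have hsR : ∀ x ∈ Ioc (0:ℝ) 1, fs x = a₁ * x ^ (ν + 1/2) + a₂ * x ^ (-ν + 1/2) :=
    fun x hx => by rw [hfsP x hx, abs_of_pos hx.1]
  have hsL : ∀ x ∈ Ioc (0:ℝ) 1, fs (-x) = b₁ * x ^ (ν + 1/2) + b₂ * x ^ (-ν + 1/2) :=
    fun x hx => by rw [hfsM (-x) ⟨by linarith [hx.2], by linarith [hx.1]⟩, abs_neg, abs_of_pos hx.1]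
  have hcoerR := le_integral_formDensity (K := K) hR hsR hν hγ.le hf1
  have hcoerL := le_integral_formDensity (K := K) hL hsL hν hγ.le hfm1
  change _ ≤ ∫ x in (-1:ℝ)..1, formDensity ν γ K fr fr'' (fun x => fr x + fs x) x
  rw [integral_neg_one_one_eq hR.intervalIntegrable_deriv_sq
      (by simpa using hL.intervalIntegrable_deriv_sq),
    integral_neg_one_one_eq (intervalIntegrable_weight hR hsR hν hγ.le)
      (by simpa using intervalIntegrable_weight hL hsL hν hγ.le),
    integral_neg_one_one_eq (intervalIntegrable_formDensity hR hsR hν hγ.le)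
      (by simpa [formDensity_neg] using intervalIntegrable_formDensity (K := K) hL hsL hν hγ.le)]
  simp only [formDensity_neg, neg_sq, abs_neg] at hcoerL ⊢
  have hboundary : (a₁ + a₂) * ((ν + 1/2) * a₁ + (-ν + 1/2) * a₂)
      + (b₁ + b₂) * ((ν + 1/2) * b₁ + (-ν + 1/2) * b₂) = 0 := by
    linear_combination ((ν + 1/2) * b₁ + (-ν + 1/2) * b₂) * hfT1 - (a₁ + a₂) * hfT2
  linarith

/-- **Coercivity of the operator `A_n` on its domain `D(A)`.**
Let `ν ∈ (0,1)`, `c_ν := ν² - 1/4`, `γ > 0`, `n ∈ ℕ*`, and `f = f_r + f_s ∈ D(A)`: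
the regular part `f_r` is `H²` on `[-1,1]` (encoded via the fundamental theorem
of calculus) with vanishing Cauchy data at `0`; the singular part `f_s` is a
combination of `|x|^(ν+1/2)`, `|x|^(-ν+1/2)` on each side of `0` with
coefficients satisfying the transmission conditions; and `f(±1) = 0`.
With `A_n f := -f_r'' + (c_ν/x²) f_r + (nπ)² |x|^(2γ) f` and
`m_ν := min {1, 4ν²}`, we have
`∫₋₁¹ (A_n f) f ≥ m_ν ∫₋₁¹ f_r'² + (nπ)² ∫₋₁¹ |x|^(2γ) f²`. -/
theorem An_coercive
    (ν : ℝ) (hν : ν ∈ Set.Ioo (0:ℝ) 1)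
    (γ : ℝ) (hγ : 0 < γ) (n : ℕ) (hn : 0 < n)
    (fr fr' fr'' fs : ℝ → ℝ)
    (a₁ a₂ b₁ b₂ : ℝ)
    -- regular part : H² on [-1,1] with f_r(0) = f_r'(0) = 0
    (hfr''int : IntervalIntegrable fr'' volume (-1) 1)
    (hfr''sq : IntervalIntegrable (fun x => fr'' x ^ 2) volume (-1) 1)
    (hfrFTC : ∀ x ∈ Set.Icc (-1:ℝ) 1, fr x = fr (-1) + ∫ t in (-1:ℝ)..x, fr' t)
    (hfr'FTC : ∀ x ∈ Set.Icc (-1:ℝ) 1, fr' x = fr' (-1) + ∫ t in (-1:ℝ)..x, fr'' t)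
    (hfr0 : fr 0 = 0) (hfr'0 : fr' 0 = 0)
    -- singular part
    (hfsP : ∀ x ∈ Set.Ioc (0:ℝ) 1,
        fs x = a₁ * |x| ^ (ν + 1/2) + a₂ * |x| ^ (-ν + 1/2))
    (hfsM : ∀ x ∈ Set.Ico (-1:ℝ) 0,
        fs x = b₁ * |x| ^ (ν + 1/2) + b₂ * |x| ^ (-ν + 1/2))
    -- transmission conditions
    (hfT1 : b₁ + b₂ + a₁ + a₂ = 0)
    (hfT2 : (ν + 1/2) * b₁ + (-ν + 1/2) * b₂ = (ν + 1/2) * a₁ + (-ν + 1/2) * a₂)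
    -- Dirichlet boundary conditions at ±1
    (hf1 : fr 1 + fs 1 = 0) (hfm1 : fr (-1) + fs (-1) = 0) :
    min 1 (4 * ν ^ 2) * (∫ x in (-1:ℝ)..1, fr' x ^ 2)
      + ((n : ℝ) * π) ^ 2 * (∫ x in (-1:ℝ)..1, |x| ^ (2*γ) * (fr x + fs x) ^ 2)
    ≤ ∫ x in (-1:ℝ)..1,
        (-(fr'' x) + ((ν ^ 2 - 1/4) / x ^ 2) * fr x
          + ((n : ℝ) * π) ^ 2 * |x| ^ (2*γ) * (fr x + fs x)) * (fr x + fs x) :=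
  An_coercive_general ν hν γ hγ n fr fr' fr'' fs a₁ a₂ b₁ b₂ hfr''int hfr''sq hfrFTC hfr'FTC hfr0
    hfr'0 hfsP hfsM hfT1 hfT2 hf1 hfm1
end
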